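/- arXiv:math/0703019 — 5 statements merged into one kernel-verified Lean document; each statement's English description precedes it below -/
import Mathlib

section
/- Let p1 and p2 be probability densities on [0,∞) with common mean θ. Consider the Markov decision process with state space [0,∞)×[0,∞), actions {0,1}, reward r((ξ1,ξ2),a)=ξ_{1+a}, and transitions: under action 1 the state moves from (ξ1,ξ2) to (ξ1+ζ,ξ2) with ζ~p1, and under action 0 to (ξ1,ξ2+ζ) with ζ~p2. Then for every finite horizon n, the greedy policy (choose action 1 if ξ2>ξ1, action 0 if ξ1>ξ2) maximizes the total expected reward; equivalently, if V_n(ξ) denotes the optimal n-step value, then for ξ1≥ξ2, ξ1 + ∫V_{n-1}((ξ1,ξ2+ζ))p2(ζ)dλ(ζ) ≥ ξ2 + ∫V_{n-1}((ξ1+ζ,ξ2))p1(ζ)dλ(ζ). -/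
open MeasureTheory

/-- Optimal `n`-step value function of the MDP: state `ξ = (ξ₁, ξ₂)`; action 0 earns
reward `ξ₁` and moves `ξ₂` by an increment with density `p2`; action 1 earns reward `ξ₂`
and moves `ξ₁` by an increment with density `p1` (densities w.r.t. `lam`). -/
noncomputable def mdpValue (lam : Measure ℝ) (p1 p2 : ℝ → ℝ) : ℕ → ℝ × ℝ → ℝ
  | 0, _ => 0
  | n + 1, xi =>
      max (xi.1 + ∫ z, mdpValue lam p1 p2 n (xi.1, xi.2 + z) * p2 z ∂lam)
          (xi.2 + ∫ z, mdpValue lam p1 p2 n (xi.1 + z, xi.2) * p1 z ∂lam)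

lemma mdp_meas (lam : Measure ℝ) [SigmaFinite lam] (p1 p2 : ℝ → ℝ)
    (hm1 : Measurable p1) (hm2 : Measurable p2) :
    ∀ n, Measurable (mdpValue lam p1 p2 n) := by
  intro n
  induction n with
  | zero => simpa [mdpValue] using measurable_const
  | succ n ih =>
    have h2 : Measurable fun x : ℝ × ℝ =>
        ∫ z, mdpValue lam p1 p2 n (x.1, x.2 + z) * p2 z ∂lam := by
      have hsm : StronglyMeasurable fun q : (ℝ × ℝ) × ℝ =>
          mdpValue lam p1 p2 n (q.1.1, q.1.2 + q.2) * p2 q.2 := by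
        apply Measurable.stronglyMeasurable
        exact (ih.comp (by fun_prop)).mul (hm2.comp measurable_snd)
      exact hsm.integral_prod_right'.measurable
    have h1 : Measurable fun x : ℝ × ℝ =>
        ∫ z, mdpValue lam p1 p2 n (x.1 + z, x.2) * p1 z ∂lam := by
      have hsm : StronglyMeasurable fun q : (ℝ × ℝ) × ℝ =>
          mdpValue lam p1 p2 n (q.1.1 + q.2, q.1.2) * p1 q.2 := by
        apply Measurable.stronglyMeasurable
        exact (ih.comp (by fun_prop)).mul (hm1.comp measurable_snd)
      exact hsm.integral_prod_right'.measurable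
    simp only [mdpValue]
    exact ((measurable_fst.add h2).max (measurable_snd.add h1))

lemma mdp_bound (lam : Measure ℝ) [SigmaFinite lam] (p1 p2 : ℝ → ℝ) (θ : ℝ)
    (hp1 : ∀ z, 0 ≤ p1 z) (hp2 : ∀ z, 0 ≤ p2 z)
    (hs1 : ∀ z < 0, p1 z = 0) (hs2 : ∀ z < 0, p2 z = 0)
    (hi1 : Integrable p1 lam) (hi2 : Integrable p2 lam)
    (h11 : ∫ z, p1 z ∂lam = 1) (h12 : ∫ z, p2 z ∂lam = 1)
    (hmi1 : Integrable (fun z => z * p1 z) lam) (hmi2 : Integrable (fun z => z * p2 z) lam)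
    (hθ1 : ∫ z, z * p1 z ∂lam = θ) (hθ2 : ∫ z, z * p2 z ∂lam = θ) (hθ : 0 ≤ θ) :
    ∀ n, ∀ a b : ℝ, 0 ≤ a → 0 ≤ b →
      0 ≤ mdpValue lam p1 p2 n (a, b) ∧
      mdpValue lam p1 p2 n (a, b) ≤ n * (a + b) + (n : ℝ) ^ 2 * θ := by
  intro n
  induction n with
  | zero => intro a b _ _; simp [mdpValue]
  | succ n ih =>
    intro a b ha hb
    have key2 : ∀ c d : ℝ, 0 ≤ c → 0 ≤ d →
        0 ≤ ∫ z, mdpValue lam p1 p2 n (c, d + z) * p2 z ∂lam ∧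
        ∫ z, mdpValue lam p1 p2 n (c, d + z) * p2 z ∂lam
          ≤ (n * (c + d) + (n : ℝ) ^ 2 * θ) + n * θ := by
      intro c d hc hd
      have hnon : ∀ z, 0 ≤ mdpValue lam p1 p2 n (c, d + z) * p2 z := by
        intro z
        rcases lt_or_ge z 0 with h | h
        · simp [hs2 z h]
        · exact mul_nonneg ((ih c (d + z) hc (by linarith)).1) (hp2 z)
      have hub : ∀ z, mdpValue lam p1 p2 n (c, d + z) * p2 z
          ≤ (n * (c + d) + (n : ℝ) ^ 2 * θ) * p2 z + n * (z * p2 z) := by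
        intro z
        rcases lt_or_ge z 0 with h | h
        · simp [hs2 z h]
        · have h1 := (ih c (d + z) hc (by linarith)).2
          have h2 := hp2 z
          nlinarith [mul_le_mul_of_nonneg_right h1 h2]
      have hgint : Integrable
          (fun z => (n * (c + d) + (n : ℝ) ^ 2 * θ) * p2 z + n * (z * p2 z)) lam :=
        (hi2.const_mul _).add (hmi2.const_mul _)
      have hle : ∫ z, mdpValue lam p1 p2 n (c, d + z) * p2 z ∂lam
          ≤ ∫ z, ((n * (c + d) + (n : ℝ) ^ 2 * θ) * p2 z + n * (z * p2 z)) ∂lam :=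
        integral_mono_of_nonneg (Filter.Eventually.of_forall hnon) hgint
          (Filter.Eventually.of_forall hub)
      have hcalc : ∫ z, ((n * (c + d) + (n : ℝ) ^ 2 * θ) * p2 z + n * (z * p2 z)) ∂lam
          = (n * (c + d) + (n : ℝ) ^ 2 * θ) + n * θ := by
        rw [integral_add (hi2.const_mul _) (hmi2.const_mul _), integral_const_mul,
          integral_const_mul, h12, hθ2]
        ring
      exact ⟨integral_nonneg hnon, by linarith⟩
    have key1 : ∀ c d : ℝ, 0 ≤ c → 0 ≤ d →
        0 ≤ ∫ z, mdpValue lam p1 p2 n (c + z, d) * p1 z ∂lam ∧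
        ∫ z, mdpValue lam p1 p2 n (c + z, d) * p1 z ∂lam
          ≤ (n * (c + d) + (n : ℝ) ^ 2 * θ) + n * θ := by
      intro c d hc hd
      have hnon : ∀ z, 0 ≤ mdpValue lam p1 p2 n (c + z, d) * p1 z := by
        intro z
        rcases lt_or_ge z 0 with h | h
        · simp [hs1 z h]
        · exact mul_nonneg ((ih (c + z) d (by linarith) hd).1) (hp1 z)
      have hub : ∀ z, mdpValue lam p1 p2 n (c + z, d) * p1 z
          ≤ (n * (c + d) + (n : ℝ) ^ 2 * θ) * p1 z + n * (z * p1 z) := by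
        intro z
        rcases lt_or_ge z 0 with h | h
        · simp [hs1 z h]
        · have h1 := (ih (c + z) d (by linarith) hd).2
          have h2 := hp1 z
          nlinarith [mul_le_mul_of_nonneg_right h1 h2]
      have hgint : Integrable
          (fun z => (n * (c + d) + (n : ℝ) ^ 2 * θ) * p1 z + n * (z * p1 z)) lam :=
        (hi1.const_mul _).add (hmi1.const_mul _)
      have hle : ∫ z, mdpValue lam p1 p2 n (c + z, d) * p1 z ∂lam
          ≤ ∫ z, ((n * (c + d) + (n : ℝ) ^ 2 * θ) * p1 z + n * (z * p1 z)) ∂lam :=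
        integral_mono_of_nonneg (Filter.Eventually.of_forall hnon) hgint
          (Filter.Eventually.of_forall hub)
      have hcalc : ∫ z, ((n * (c + d) + (n : ℝ) ^ 2 * θ) * p1 z + n * (z * p1 z)) ∂lam
          = (n * (c + d) + (n : ℝ) ^ 2 * θ) + n * θ := by
        rw [integral_add (hi1.const_mul _) (hmi1.const_mul _), integral_const_mul,
          integral_const_mul, h11, hθ1]
        ring
      exact ⟨integral_nonneg hnon, by linarith⟩
    constructor
    · simp only [mdpValue]
      have := (key2 a b ha hb).1
      have h0 : (0:ℝ) ≤ a + ∫ z, mdpValue lam p1 p2 n (a, b + z) * p2 z ∂lam := by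
        simpa using add_nonneg ha this
      exact le_trans h0 (le_max_left _ _)
    · simp only [mdpValue]
      have hA := (key2 a b ha hb).2
      have hB := (key1 a b ha hb).2
      have hcast : ((n : ℝ) + 1) = ((n + 1 : ℕ) : ℝ) := by push_cast; ring
      apply max_le <;> push_cast <;> nlinarith

lemma mdp_aux (lam : Measure ℝ) [SigmaFinite lam] (p1 p2 : ℝ → ℝ) (θ : ℝ)
    (hp1 : ∀ z, 0 ≤ p1 z) (hp2 : ∀ z, 0 ≤ p2 z)
    (hs1 : ∀ z < 0, p1 z = 0) (hs2 : ∀ z < 0, p2 z = 0)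
    (hm1 : Measurable p1) (hm2 : Measurable p2)
    (hi1 : Integrable p1 lam) (hi2 : Integrable p2 lam)
    (h11 : ∫ z, p1 z ∂lam = 1) (h12 : ∫ z, p2 z ∂lam = 1)
    (hmi1 : Integrable (fun z => z * p1 z) lam) (hmi2 : Integrable (fun z => z * p2 z) lam)
    (hθ1 : ∫ z, z * p1 z ∂lam = θ) (hθ2 : ∫ z, z * p2 z ∂lam = θ) (hθ : 0 ≤ θ)
    (n : ℕ) (a b : ℝ) (ha : 0 ≤ a) (hb : 0 ≤ b) :
    (Integrable (fun z => mdpValue lam p1 p2 n (a, b + z) * p2 z) lam ∧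
      0 ≤ ∫ z, mdpValue lam p1 p2 n (a, b + z) * p2 z ∂lam ∧
      ∫ z, mdpValue lam p1 p2 n (a, b + z) * p2 z ∂lam
        ≤ n * (a + b) + (n : ℝ) ^ 2 * θ + n * θ) ∧
    (Integrable (fun z => mdpValue lam p1 p2 n (a + z, b) * p1 z) lam ∧
      0 ≤ ∫ z, mdpValue lam p1 p2 n (a + z, b) * p1 z ∂lam ∧
      ∫ z, mdpValue lam p1 p2 n (a + z, b) * p1 z ∂lam
        ≤ n * (a + b) + (n : ℝ) ^ 2 * θ + n * θ) := by
  have hbd := mdp_bound lam p1 p2 θ hp1 hp2 hs1 hs2 hi1 hi2 h11 h12 hmi1 hmi2 hθ1 hθ2 hθ n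
  have hmV := mdp_meas lam p1 p2 hm1 hm2 n
  constructor
  · have hnon : ∀ z, 0 ≤ mdpValue lam p1 p2 n (a, b + z) * p2 z := by
      intro z
      rcases lt_or_ge z 0 with h | h
      · simp [hs2 z h]
      · exact mul_nonneg (hbd a (b + z) ha (by linarith)).1 (hp2 z)
    have hub : ∀ z, mdpValue lam p1 p2 n (a, b + z) * p2 z
        ≤ (n * (a + b) + (n : ℝ) ^ 2 * θ) * p2 z + n * (z * p2 z) := by
      intro z
      rcases lt_or_ge z 0 with h | h
      · simp [hs2 z h]
      · have h1 := (hbd a (b + z) ha (by linarith)).2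
        have h2 := hp2 z
        nlinarith [mul_le_mul_of_nonneg_right h1 h2]
    have hgint : Integrable
        (fun z => (n * (a + b) + (n : ℝ) ^ 2 * θ) * p2 z + n * (z * p2 z)) lam :=
      (hi2.const_mul _).add (hmi2.const_mul _)
    have hint : Integrable (fun z => mdpValue lam p1 p2 n (a, b + z) * p2 z) lam := by
      refine hgint.mono' ?_ (Filter.Eventually.of_forall fun z => ?_)
      · exact ((hmV.comp (by fun_prop : Measurable fun z : ℝ => (a, b + z))).mul
          hm2).aestronglyMeasurable
      · rw [Real.norm_eq_abs, abs_of_nonneg (hnon z)]; exact hub z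
    refine ⟨hint, integral_nonneg hnon, ?_⟩
    have hle := integral_mono_of_nonneg (Filter.Eventually.of_forall hnon) hgint
      (Filter.Eventually.of_forall hub)
    have hcalc : ∫ z, ((n * (a + b) + (n : ℝ) ^ 2 * θ) * p2 z + n * (z * p2 z)) ∂lam
        = (n * (a + b) + (n : ℝ) ^ 2 * θ) + n * θ := by
      rw [integral_add (hi2.const_mul _) (hmi2.const_mul _), integral_const_mul,
        integral_const_mul, h12, hθ2]
      ring
    linarith
  · have hnon : ∀ z, 0 ≤ mdpValue lam p1 p2 n (a + z, b) * p1 z := by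
      intro z
      rcases lt_or_ge z 0 with h | h
      · simp [hs1 z h]
      · exact mul_nonneg (hbd (a + z) b (by linarith) hb).1 (hp1 z)
    have hub : ∀ z, mdpValue lam p1 p2 n (a + z, b) * p1 z
        ≤ (n * (a + b) + (n : ℝ) ^ 2 * θ) * p1 z + n * (z * p1 z) := by
      intro z
      rcases lt_or_ge z 0 with h | h
      · simp [hs1 z h]
      · have h1 := (hbd (a + z) b (by linarith) hb).2
        have h2 := hp1 z
        nlinarith [mul_le_mul_of_nonneg_right h1 h2]
    have hgint : Integrable
        (fun z => (n * (a + b) + (n : ℝ) ^ 2 * θ) * p1 z + n * (z * p1 z)) lam :=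
      (hi1.const_mul _).add (hmi1.const_mul _)
    have hint : Integrable (fun z => mdpValue lam p1 p2 n (a + z, b) * p1 z) lam := by
      refine hgint.mono' ?_ (Filter.Eventually.of_forall fun z => ?_)
      · exact ((hmV.comp (by fun_prop : Measurable fun z : ℝ => (a + z, b))).mul
          hm1).aestronglyMeasurable
      · rw [Real.norm_eq_abs, abs_of_nonneg (hnon z)]; exact hub z
    refine ⟨hint, integral_nonneg hnon, ?_⟩
    have hle := integral_mono_of_nonneg (Filter.Eventually.of_forall hnon) hgint
      (Filter.Eventually.of_forall hub)
    have hcalc : ∫ z, ((n * (a + b) + (n : ℝ) ^ 2 * θ) * p1 z + n * (z * p1 z)) ∂lam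
        = (n * (a + b) + (n : ℝ) ^ 2 * θ) + n * θ := by
      rw [integral_add (hi1.const_mul _) (hmi1.const_mul _), integral_const_mul,
        integral_const_mul, h11, hθ1]
      ring
    linarith

lemma mdp_key (lam : Measure ℝ) [SigmaFinite lam] (p1 p2 : ℝ → ℝ) (θ : ℝ)
    (hp1 : ∀ z, 0 ≤ p1 z) (hp2 : ∀ z, 0 ≤ p2 z)
    (hs1 : ∀ z < 0, p1 z = 0) (hs2 : ∀ z < 0, p2 z = 0)
    (hm1 : Measurable p1) (hm2 : Measurable p2)
    (hi1 : Integrable p1 lam) (hi2 : Integrable p2 lam)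
    (h11 : ∫ z, p1 z ∂lam = 1) (h12 : ∫ z, p2 z ∂lam = 1)
    (hmi1 : Integrable (fun z => z * p1 z) lam) (hmi2 : Integrable (fun z => z * p2 z) lam)
    (hθ1 : ∫ z, z * p1 z ∂lam = θ) (hθ2 : ∫ z, z * p2 z ∂lam = θ) (hθ : 0 ≤ θ) :
    ∀ n : ℕ, ∀ x1 x2 : ℝ, 0 ≤ x2 → x2 ≤ x1 →
      x2 + ∫ z, mdpValue lam p1 p2 n (x1 + z, x2) * p1 z ∂lam
        ≤ x1 + ∫ z, mdpValue lam p1 p2 n (x1, x2 + z) * p2 z ∂lam := by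
  have hbd := mdp_bound lam p1 p2 θ hp1 hp2 hs1 hs2 hi1 hi2 h11 h12 hmi1 hmi2 hθ1 hθ2 hθ
  have haux := mdp_aux lam p1 p2 θ hp1 hp2 hs1 hs2 hm1 hm2 hi1 hi2 h11 h12 hmi1 hmi2 hθ1 hθ2 hθ
  have hmV := mdp_meas lam p1 p2 hm1 hm2
  intro n
  induction n with
  | zero =>
    intro x1 x2 hx2 hle
    simp only [mdpValue, zero_mul, integral_zero]
    linarith
  | succ n ih =>
    intro x1 x2 hx2 hle
    have hx1 : 0 ≤ x1 := le_trans hx2 hle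
    -- equality for the (n+1)-horizon value at states (x1+c, x2) with c ≥ 0
    have hEq : ∀ c : ℝ, 0 ≤ c → mdpValue lam p1 p2 (n + 1) (x1 + c, x2)
        = (x1 + c) + ∫ w, mdpValue lam p1 p2 n (x1 + c, x2 + w) * p2 w ∂lam := by
      intro c hc
      have h := ih (x1 + c) x2 hx2 (by linarith)
      simp only [mdpValue]
      exact max_eq_left h
    -- rewrite the B side
    have hJint : Integrable (fun z => (∫ w, mdpValue lam p1 p2 n (x1 + z, x2 + w) * p2 w ∂lam) * p1 z) lam := by
      have hsm : StronglyMeasurable fun q : ℝ × ℝ =>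
          mdpValue lam p1 p2 n (x1 + q.1, x2 + q.2) * p2 q.2 := by
        apply Measurable.stronglyMeasurable
        exact ((hmV n).comp (by fun_prop)).mul (hm2.comp measurable_snd)
      have hJm : Measurable fun z => ∫ w, mdpValue lam p1 p2 n (x1 + z, x2 + w) * p2 w ∂lam :=
        hsm.integral_prod_right'.measurable
      have hgint : Integrable (fun z =>
          (n * (x1 + x2) + (n : ℝ) ^ 2 * θ + n * θ) * p1 z + n * (z * p1 z)) lam :=
        (hi1.const_mul _).add (hmi1.const_mul _)
      refine hgint.mono' (hJm.mul hm1).aestronglyMeasurable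
        (Filter.Eventually.of_forall fun z => ?_)
      rcases lt_or_ge z 0 with h | h
      · simp [hs1 z h]
      · obtain ⟨_, hJ0, hJub⟩ := (haux n (x1 + z) x2 (by linarith) hx2).1
        rw [Real.norm_eq_abs, abs_of_nonneg (mul_nonneg hJ0 (hp1 z))]
        have := hp1 z
        nlinarith [mul_le_mul_of_nonneg_right hJub (hp1 z)]
    have hB : ∫ z, mdpValue lam p1 p2 (n + 1) (x1 + z, x2) * p1 z ∂lam
        = x1 + θ + ∫ z, (∫ w, mdpValue lam p1 p2 n (x1 + z, x2 + w) * p2 w ∂lam) * p1 z ∂lam := by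
      have hptw : ∀ z, mdpValue lam p1 p2 (n + 1) (x1 + z, x2) * p1 z
          = (x1 * p1 z + z * p1 z) + (∫ w, mdpValue lam p1 p2 n (x1 + z, x2 + w) * p2 w ∂lam) * p1 z := by
        intro z
        rcases lt_or_ge z 0 with h | h
        · simp [hs1 z h]
        · rw [hEq z h]; ring
      have ha1 : Integrable (fun z => x1 * p1 z + z * p1 z) lam := by
        exact (hi1.const_mul x1).add hmi1
      rw [integral_congr_ae (Filter.Eventually.of_forall hptw),
        integral_add ha1 hJint,
        integral_add (hi1.const_mul x1) hmi1, integral_const_mul, h11, hθ1]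
      ring
    -- lower bound for the A side
    have hKint : Integrable (fun z => (∫ w, mdpValue lam p1 p2 n (x1 + w, x2 + z) * p1 w ∂lam) * p2 z) lam := by
      have hsm : StronglyMeasurable fun q : ℝ × ℝ =>
          mdpValue lam p1 p2 n (x1 + q.2, x2 + q.1) * p1 q.2 := by
        apply Measurable.stronglyMeasurable
        exact ((hmV n).comp (by fun_prop)).mul (hm1.comp measurable_snd)
      have hKm : Measurable fun z => ∫ w, mdpValue lam p1 p2 n (x1 + w, x2 + z) * p1 w ∂lam :=
        hsm.integral_prod_right'.measurable
      have hgint : Integrable (fun z =>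
          (n * (x1 + x2) + (n : ℝ) ^ 2 * θ + n * θ) * p2 z + n * (z * p2 z)) lam :=
        (hi2.const_mul _).add (hmi2.const_mul _)
      refine hgint.mono' (hKm.mul hm2).aestronglyMeasurable
        (Filter.Eventually.of_forall fun z => ?_)
      rcases lt_or_ge z 0 with h | h
      · simp [hs2 z h]
      · obtain ⟨_, hK0, hKub⟩ := (haux n x1 (x2 + z) hx1 (by linarith)).2
        rw [Real.norm_eq_abs, abs_of_nonneg (mul_nonneg hK0 (hp2 z))]
        have := hp2 z
        nlinarith [mul_le_mul_of_nonneg_right hKub (hp2 z)]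
    have hA : x2 + θ + ∫ z, (∫ w, mdpValue lam p1 p2 n (x1 + w, x2 + z) * p1 w ∂lam) * p2 z ∂lam
        ≤ ∫ z, mdpValue lam p1 p2 (n + 1) (x1, x2 + z) * p2 z ∂lam := by
      have hnon : ∀ z, 0 ≤ (x2 * p2 z + z * p2 z) + (∫ w, mdpValue lam p1 p2 n (x1 + w, x2 + z) * p1 w ∂lam) * p2 z := by
        intro z
        rcases lt_or_ge z 0 with h | h
        · simp [hs2 z h]
        · obtain ⟨_, hK0, _⟩ := (haux n x1 (x2 + z) hx1 (by linarith)).2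
          have h2 := hp2 z
          have : 0 ≤ z * p2 z := mul_nonneg h h2
          nlinarith [mul_nonneg hK0 h2, mul_nonneg hx2 h2]
      have hub : ∀ z, (x2 * p2 z + z * p2 z) + (∫ w, mdpValue lam p1 p2 n (x1 + w, x2 + z) * p1 w ∂lam) * p2 z
          ≤ mdpValue lam p1 p2 (n + 1) (x1, x2 + z) * p2 z := by
        intro z
        rcases lt_or_ge z 0 with h | h
        · simp [hs2 z h]
        · have hmax : (x2 + z) + ∫ w, mdpValue lam p1 p2 n (x1 + w, x2 + z) * p1 w ∂lam ≤ mdpValue lam p1 p2 (n + 1) (x1, x2 + z) := by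
            simp only [mdpValue]
            exact le_max_right _ _
          have := mul_le_mul_of_nonneg_right hmax (hp2 z)
          nlinarith [this]
      have hVint := ((haux (n + 1) x1 x2 hx1 hx2).1).1
      have hle := integral_mono_of_nonneg (Filter.Eventually.of_forall hnon) hVint
        (Filter.Eventually.of_forall hub)
      have hcalc : ∫ z, ((x2 * p2 z + z * p2 z) + (∫ w, mdpValue lam p1 p2 n (x1 + w, x2 + z) * p1 w ∂lam) * p2 z) ∂lam
          = x2 + θ + ∫ z, (∫ w, mdpValue lam p1 p2 n (x1 + w, x2 + z) * p1 w ∂lam) * p2 z ∂lam := by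
        have ha1 : Integrable (fun z => x2 * p2 z + z * p2 z) lam := by
          exact (hi2.const_mul x2).add hmi2
        rw [integral_add ha1 hKint,
          integral_add (hi2.const_mul x2) hmi2, integral_const_mul, h12, hθ2]
        ring
      linarith
    -- Fubini: the two double integrals agree
    have hswap : ∫ z, (∫ w, mdpValue lam p1 p2 n (x1 + w, x2 + z) * p1 w ∂lam) * p2 z ∂lam = ∫ z, (∫ w, mdpValue lam p1 p2 n (x1 + z, x2 + w) * p2 w ∂lam) * p1 z ∂lam := by
      have hFint : Integrable (Function.uncurry fun w z =>
          mdpValue lam p1 p2 n (x1 + w, x2 + z) * p1 w * p2 z) (lam.prod lam) := by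
        have hgint : Integrable (fun q : ℝ × ℝ =>
            (n * (x1 + x2) + (n : ℝ) ^ 2 * θ) * (p1 q.1 * p2 q.2)
              + (n * ((q.1 * p1 q.1) * p2 q.2) + n * (p1 q.1 * (q.2 * p2 q.2))))
            (lam.prod lam) :=
          ((hi1.mul_prod hi2).const_mul _).add
            (((hmi1.mul_prod hi2).const_mul _).add ((hi1.mul_prod hmi2).const_mul _))
        refine hgint.mono' ?_ (Filter.Eventually.of_forall fun q => ?_)
        · apply Measurable.aestronglyMeasurable
          exact (((hmV n).comp (by fun_prop : Measurable fun q : ℝ × ℝ =>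
            (x1 + q.1, x2 + q.2))).mul (hm1.comp measurable_fst)).mul (hm2.comp measurable_snd)
        · obtain ⟨w, z⟩ := q
          simp only [Function.uncurry]
          rcases lt_or_ge w 0 with h | h
          · simp [hs1 w h]
          rcases lt_or_ge z 0 with h' | h'
          · simp [hs2 z h']
          have hb := hbd n (x1 + w) (x2 + z) (by linarith) (by linarith)
          have h1 := hp1 w
          have h2 := hp2 z
          rw [Real.norm_eq_abs, abs_of_nonneg (mul_nonneg (mul_nonneg hb.1 h1) h2)]
          nlinarith [mul_le_mul_of_nonneg_right (mul_le_mul_of_nonneg_right hb.2 h1) h2,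
            mul_nonneg (mul_nonneg (mul_nonneg h h1) h) h2]
      have hsw := integral_integral_swap hFint
      calc ∫ z, (∫ w, mdpValue lam p1 p2 n (x1 + w, x2 + z) * p1 w ∂lam) * p2 z ∂lam
          = ∫ z, ∫ w, mdpValue lam p1 p2 n (x1 + w, x2 + z) * p1 w * p2 z ∂lam ∂lam := by
            refine integral_congr_ae (Filter.Eventually.of_forall fun z => ?_)
            exact (integral_mul_const (p2 z) _).symm
        _ = ∫ w, ∫ z, mdpValue lam p1 p2 n (x1 + w, x2 + z) * p1 w * p2 z ∂lam ∂lam := hsw.symm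
        _ = ∫ w, (∫ z, mdpValue lam p1 p2 n (x1 + w, x2 + z) * p2 z ∂lam) * p1 w ∂lam := by
            refine integral_congr_ae (Filter.Eventually.of_forall fun w => ?_)
            show ∫ z, mdpValue lam p1 p2 n (x1 + w, x2 + z) * p1 w * p2 z ∂lam
                = (∫ z, mdpValue lam p1 p2 n (x1 + w, x2 + z) * p2 z ∂lam) * p1 w
            rw [← integral_mul_const]
            refine integral_congr_ae (Filter.Eventually.of_forall fun z => ?_)
            ring
    linarith

/-- The greedy policy is optimal for every finite horizon: when `ξ₂ ≤ ξ₁`, the action with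
immediate reward `ξ₁` attains the optimal value. -/
theorem greedy_optimal_finite_horizon
    (lam : Measure ℝ) [SigmaFinite lam] (p1 p2 : ℝ → ℝ) (θ : ℝ)
    (hp1 : ∀ z, 0 ≤ p1 z) (hp2 : ∀ z, 0 ≤ p2 z)
    (hs1 : ∀ z < 0, p1 z = 0) (hs2 : ∀ z < 0, p2 z = 0)
    (hm1 : Measurable p1) (hm2 : Measurable p2)
    (hi1 : Integrable p1 lam) (hi2 : Integrable p2 lam)
    (h11 : ∫ z, p1 z ∂lam = 1) (h12 : ∫ z, p2 z ∂lam = 1)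
    (hmi1 : Integrable (fun z => z * p1 z) lam) (hmi2 : Integrable (fun z => z * p2 z) lam)
    (hθ1 : ∫ z, z * p1 z ∂lam = θ) (hθ2 : ∫ z, z * p2 z ∂lam = θ) :
    ∀ n : ℕ, ∀ x1 x2 : ℝ, 0 ≤ x2 → x2 ≤ x1 →
      (x1 + ∫ z, mdpValue lam p1 p2 n (x1, x2 + z) * p2 z ∂lam)
          ≥ x2 + ∫ z, mdpValue lam p1 p2 n (x1 + z, x2) * p1 z ∂lam ∧
      mdpValue lam p1 p2 (n + 1) (x1, x2)
          = x1 + ∫ z, mdpValue lam p1 p2 n (x1, x2 + z) * p2 z ∂lam := by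
  have hθ : 0 ≤ θ := by
    rw [← hθ1]
    apply integral_nonneg
    intro z
    rcases lt_or_ge z 0 with h | h
    · simp [hs1 z h]
    · exact mul_nonneg h (hp1 z)
  have key := mdp_key lam p1 p2 θ hp1 hp2 hs1 hs2 hm1 hm2 hi1 hi2 h11 h12 hmi1 hmi2 hθ1 hθ2 hθ
  intro n x1 x2 hx2 hle
  refine ⟨key n x1 x2 hx2 hle, ?_⟩
  simp only [mdpValue]
  exact max_eq_left (key n x1 x2 hx2 hle)
end

section
/- Let Γ_R[n] and Γ_S[n] be the partial sums of nonnegative sequences bounded by γ, and suppose a nondecreasing integer process R_G(n) with S_G(n)=n−R_G(n) satisfies |Γ_R[R_G(n)] − Γ_S[S_G(n)]| ≤ γ for all n, with R_G and S_G nondecreasing. Then for all 0 ≤ x ≤ n: (i) Γ_R[⌈x⌉] < Γ_S[n−⌈x⌉] − γ implies R_G(n) > x, and (ii) R_G(n) > x implies Γ_R[⌊x⌋] ≤ Γ_S[n−⌊x⌋] + γ. -/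
/-- Lemma 3.1 (sandwich for the greedy selection count): if `ΓR`, `ΓS` are partial sums of
nonnegative sequences bounded by `γ` (so `ΓR 0 = ΓS 0 = 0` and increments lie in `[0, γ]`),
`RG` is the greedy count with `SG n = n - RG n`, both counts nondecreasing, `RG n ≤ n`,
and the greedy invariant `|ΓR (RG n) - ΓS (n - RG n)| ≤ γ` holds, then for real `0 ≤ x ≤ n`:
`ΓR ⌈x⌉ < ΓS (n - ⌈x⌉) - γ → RG n > x`, and `RG n > x → ΓR ⌊x⌋ ≤ ΓS (n - ⌊x⌋) + γ`. -/
theorem greedy_sandwich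
    (ΓR ΓS : ℕ → ℝ) (γ : ℝ) (RG : ℕ → ℕ)
    (hγ : 0 ≤ γ)
    (hR0 : ΓR 0 = 0) (hS0 : ΓS 0 = 0)
    (hRinc : ∀ n, ΓR (n + 1) - ΓR n ∈ Set.Icc 0 γ)
    (hSinc : ∀ n, ΓS (n + 1) - ΓS n ∈ Set.Icc 0 γ)
    (hRGle : ∀ n, RG n ≤ n)
    (hRGmono : Monotone RG) (hSGmono : Monotone fun n => n - RG n)
    (hinv : ∀ n, |ΓR (RG n) - ΓS (n - RG n)| ≤ γ) :
    ∀ n : ℕ, ∀ x : ℝ, 0 ≤ x → x ≤ n →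
      (ΓR ⌈x⌉₊ < ΓS (n - ⌈x⌉₊) - γ → x < RG n) ∧
      (x < RG n → ΓR ⌊x⌋₊ ≤ ΓS (n - ⌊x⌋₊) + γ) := by
  have hRmono : Monotone ΓR := monotone_nat_of_le_succ fun k => by
    have := (hRinc k).1; linarith
  have hSmono : Monotone ΓS := monotone_nat_of_le_succ fun k => by
    have := (hSinc k).1; linarith
  intro n x hx0 hxn
  constructor
  · intro h
    by_contra hlt
    push_neg at hlt
    have hle : RG n ≤ ⌈x⌉₊ := by
      have h1 : (RG n : ℝ) ≤ x := hlt
      have h2 : RG n ≤ ⌊x⌋₊ := Nat.le_floor h1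
      exact h2.trans (Nat.floor_le_ceil x)
    have hcn : ⌈x⌉₊ ≤ n := Nat.ceil_le.mpr hxn
    have h3 : ΓR (RG n) ≤ ΓR ⌈x⌉₊ := hRmono hle
    have h4 : ΓS (n - ⌈x⌉₊) ≤ ΓS (n - RG n) := hSmono (by omega)
    have h5 := (abs_le.mp (hinv n)).1
    linarith
  · intro h
    have hfl : ⌊x⌋₊ < RG n := by
      have : (⌊x⌋₊ : ℝ) ≤ x := Nat.floor_le hx0
      exact_mod_cast lt_of_le_of_lt this h
    -- find minimal m with RG m ≥ ⌊x⌋₊ + 1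
    have hex : ∃ m, ⌊x⌋₊ + 1 ≤ RG m := ⟨n, hfl⟩
    classical
    set m := Nat.find hex with hm
    have hms : ⌊x⌋₊ + 1 ≤ RG m := Nat.find_spec hex
    have hmn : m ≤ n := Nat.find_le hfl
    have hm0 : m ≠ 0 := by
      intro h0
      have := hRGle 0
      rw [h0] at hms; omega
    obtain ⟨k, hk⟩ := Nat.exists_eq_succ_of_ne_zero hm0
    have hkm : RG k ≤ ⌊x⌋₊ := by
      have := Nat.find_min hex (m := k) (by omega)
      omega
    have hstep : RG m ≤ RG k + 1 := by
      have hsg := hSGmono (show k ≤ m by omega)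
      simp only at hsg
      have h1 := hRGle k
      have h2 := hRGle m
      omega
    have hRGm : RG m = ⌊x⌋₊ + 1 := by omega
    have h5 := (abs_le.mp (hinv m)).2
    rw [hRGm] at h5
    have h6 : ΓR ⌊x⌋₊ ≤ ΓR (⌊x⌋₊ + 1) := hRmono (by omega)
    have h7 : ΓS (m - (⌊x⌋₊ + 1)) ≤ ΓS (n - ⌊x⌋₊) := hSmono (by omega)
    linarith
end

section
/- Under the greedy policy, for all t ≥ 1 and n ≥ (2 + γ/μ)², Pr(|R_G(n) − n/2| > t√n) ≤ 2 exp(−(μ/(2γ))² t). -/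
/-!
The greedy rule keeps the two running totals within `γ` of each other. Hence if `R_G(n)`
overshoots `n/2` by more than `t√n`, then for `k = ⌈n/2 + t√n⌉` the first `k` items of one
sequence total at most the first `n - k` items of the other plus `γ`, although their means differ
by `(2k - n)μ ≥ 2tμ√n`. Hoeffding's inequality, applied to the `n` independent centred summands
of this difference, makes each of the two events exponentially unlikely; `n ≥ (2 + γ/μ)²` is what
lets the drift `2tμ√n` absorb the slack `γ`.
-/

open MeasureTheory ProbabilityTheory Finset Real

theorem sum_range_le_sum_range_add_of_le {x y : ℕ → ℝ} {c : ℝ} (hx : ∀ i, 0 ≤ x i)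
    (hy : ∀ j, 0 ≤ y j) {p q k l : ℕ} (h : ∑ i ∈ range p, x i ≤ ∑ j ∈ range q, y j + c)
    (hkp : k ≤ p) (hql : q ≤ l) : ∑ i ∈ range k, x i ≤ ∑ j ∈ range l, y j + c := by
  have hx_mono := sum_le_sum_of_subset_of_nonneg (range_subset_range.2 hkp) fun i _ _ ↦ hx i
  have hy_mono := sum_le_sum_of_subset_of_nonneg (range_subset_range.2 hql) fun j _ _ ↦ hy j
  linarith

/-- `r n` of the first `n` picks are taken from `x`, the other `n - r n` from `y`: the next pick
comes from the side with the smaller running total, ties going to `x`. -/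
structure IsGreedySelection (x y : ℕ → ℝ) (r : ℕ → ℕ) : Prop where
  zero : r 0 = 0
  succ_of_lt : ∀ n, ∑ i ∈ range (r n), x i < ∑ j ∈ range (n - r n), y j → r (n + 1) = r n + 1
  succ_of_gt : ∀ n, ∑ j ∈ range (n - r n), y j < ∑ i ∈ range (r n), x i → r (n + 1) = r n
  succ_of_eq : ∀ n, ∑ j ∈ range (n - r n), y j = ∑ i ∈ range (r n), x i → r (n + 1) = r n + 1

namespace IsGreedySelection

variable {x y : ℕ → ℝ} {r : ℕ → ℕ} {γ : ℝ}

theorem le_and_abs_sub_le (hr : IsGreedySelection x y r) (hx : ∀ i, x i ∈ Set.Icc 0 γ)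
    (hy : ∀ j, y j ∈ Set.Icc 0 γ) (n : ℕ) :
    r n ≤ n ∧ |∑ i ∈ range (r n), x i - ∑ j ∈ range (n - r n), y j| ≤ γ := by
  induction n with
  | zero => simp [hr.zero, (hx 0).1.trans (hx 0).2]
  | succ n ih =>
    obtain ⟨hrn, hgap⟩ := ih
    obtain ⟨hgap₁, hgap₂⟩ := abs_le.1 hgap
    rcases lt_or_ge (∑ j ∈ range (n - r n), y j) (∑ i ∈ range (r n), x i) with hgt | hle
    · rw [hr.succ_of_gt n hgt, show n + 1 - r n = n - r n + 1 by omega, sum_range_succ]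
      have := hy (n - r n)
      exact ⟨by omega, abs_le.2 ⟨by linarith [this.2], by linarith [this.1]⟩⟩
    · have hsucc : r (n + 1) = r n + 1 :=
        hle.lt_or_eq.elim (hr.succ_of_lt n) fun h ↦ hr.succ_of_eq n h.symm
      rw [hsucc, show n + 1 - (r n + 1) = n - r n by omega, sum_range_succ]
      have := hx (r n)
      exact ⟨by omega, abs_le.2 ⟨by linarith [this.1], by linarith [this.2]⟩⟩

theorem le_and_sum_range_le_of_lt_abs_sub_half (hr : IsGreedySelection x y r)
    (hx : ∀ i, x i ∈ Set.Icc 0 γ) (hy : ∀ j, y j ∈ Set.Icc 0 γ) {n k : ℕ} {s : ℝ}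
    (hk : k ≤ ⌈(n : ℝ) / 2 + s⌉₊) (hs : s < |(r n : ℝ) - n / 2|) :
    k ≤ n ∧ (∑ i ∈ range k, x i ≤ ∑ j ∈ range (n - k), y j + γ ∨
      ∑ j ∈ range k, y j ≤ ∑ i ∈ range (n - k), x i + γ) := by
  obtain ⟨hrn, hgap⟩ := hr.le_and_abs_sub_le hx hy n
  rcases lt_abs.1 hs with hup | hdown
  · have hkr : k ≤ r n := hk.trans (Nat.ceil_le.2 (by linarith))
    exact ⟨hkr.trans hrn, .inl <| sum_range_le_sum_range_add_of_le
      (fun i ↦ (hx i).1) (fun j ↦ (hy j).1) (by linarith [(abs_sub_le_iff.1 hgap).1]) hkr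
      (by omega)⟩
  · have hkr : k ≤ n - r n := hk.trans (Nat.ceil_le.2 (by rw [Nat.cast_sub hrn]; linarith))
    exact ⟨by omega, .inr <| sum_range_le_sum_range_add_of_le
      (fun j ↦ (hy j).1) (fun i ↦ (hx i).1) (by linarith [(abs_sub_le_iff.1 hgap).2]) hkr
      (by omega)⟩

end IsGreedySelection

section Hoeffding

variable {Ω : Type*} [MeasurableSpace Ω] {P : Measure Ω}

theorem ProbabilityTheory.iIndepFun.sum_elim_swap {ι κ β : Type*} [MeasurableSpace β]
    {f : ι → Ω → β} {g : κ → Ω → β} (h : iIndepFun (Sum.elim f g) P) :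
    iIndepFun (Sum.elim g f) P := by
  simpa [← Function.comp_def, Sum.elim_swap] using h.precomp Sum.swap_leftInverse.injective

variable [IsProbabilityMeasure P]

theorem measureReal_sum_range_le_sum_range_add_le {A B : ℕ → Ω → ℝ} {a b μ δ : ℝ}
    (hindep : iIndepFun (Sum.elim A B) P)
    (hmA : ∀ i, AEMeasurable (A i) P) (hmB : ∀ j, AEMeasurable (B j) P)
    (hA : ∀ i, ∀ᵐ ω ∂P, A i ω ∈ Set.Icc a b) (hB : ∀ j, ∀ᵐ ω ∂P, B j ω ∈ Set.Icc a b)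
    (hμA : ∀ i, P[A i] = μ) (hμB : ∀ j, P[B j] = μ) (k m : ℕ) (hδ : δ ≤ ((k : ℝ) - m) * μ) :
    P.real {ω | ∑ i ∈ range k, A i ω ≤ ∑ j ∈ range m, B j ω + δ}
      ≤ exp (-2 * (((k : ℝ) - m) * μ - δ) ^ 2 / ((k + m) * (b - a) ^ 2)) := by
  set Z : ℕ ⊕ ℕ → Ω → ℝ := Sum.elim (fun i ω ↦ μ - A i ω) (fun j ω ↦ B j ω - μ)
  have hZ_indep : iIndepFun Z P := by
    convert hindep.comp (Sum.elim (fun _ x ↦ μ - x) (fun _ x ↦ x - μ))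
      (by rintro (i | j) <;> simp only [Sum.elim_inl, Sum.elim_inr] <;> fun_prop) using 1
    ext (i | j) <;> rfl
  have hZ_subG : ∀ s, HasSubgaussianMGF (Z s) ((‖b - a‖₊ / 2) ^ 2) P := by
    rintro (i | j)
    · refine (hasSubgaussianMGF_of_mem_Icc (hmA i) (hA i)).neg.congr (ae_of_all _ fun ω ↦ ?_)
      simp only [hμA, Pi.neg_apply, neg_sub, Sum.elim_inl, Z]
    · simpa [Z, hμB] using hasSubgaussianMGF_of_mem_Icc (hmB j) (hB j)
  have hZ_sum : ∀ ω, ∑ s ∈ (range k).disjSum (range m), Z s ω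
      = ((k : ℝ) - m) * μ - ∑ i ∈ range k, A i ω + ∑ j ∈ range m, B j ω := by
    intro ω
    simp only [Z, sum_disjSum, Sum.elim_inl, Sum.elim_inr, sum_sub_distrib, sum_const,
      card_range, nsmul_eq_mul]
    ring
  calc P.real {ω | ∑ i ∈ range k, A i ω ≤ ∑ j ∈ range m, B j ω + δ}
      ≤ P.real {ω | ((k : ℝ) - m) * μ - δ ≤ ∑ s ∈ (range k).disjSum (range m), Z s ω} :=
        measureReal_mono fun ω hω ↦ by
          simp only [Set.mem_ofPred_eq, hZ_sum] at hω ⊢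
          linarith
    _ ≤ _ := HasSubgaussianMGF.measure_sum_ge_le_of_iIndepFun hZ_indep (fun s _ ↦ hZ_subG s)
        (sub_nonneg.2 hδ)
    _ = _ := by
      simp only [card_disjSum, card_range, sum_const, nsmul_eq_mul]
      push_cast
      rw [div_pow, Real.norm_eq_abs, sq_abs,
        show (2 : ℝ) * ((k + m) * ((b - a) ^ 2 / 2 ^ 2)) = (k + m) * (b - a) ^ 2 / 2 by ring,
        div_div_eq_mul_div]
      congr 1
      ring

theorem measureReal_sum_range_le_sum_range_sub_add_le {A B : ℕ → Ω → ℝ} {γ μ t : ℝ}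
    (hindep : iIndepFun (Sum.elim A B) P)
    (hmA : ∀ i, AEMeasurable (A i) P) (hmB : ∀ j, AEMeasurable (B j) P)
    (hA : ∀ i, ∀ᵐ ω ∂P, A i ω ∈ Set.Icc 0 γ) (hB : ∀ j, ∀ᵐ ω ∂P, B j ω ∈ Set.Icc 0 γ)
    (hμA : ∀ i, P[A i] = μ) (hμB : ∀ j, P[B j] = μ) (hγ : 0 < γ) (ht : 1 ≤ t) {n k : ℕ}
    (hγn : γ ≤ μ * √n) (hk : n / 2 + t * √n ≤ k) (hkn : k ≤ n) :
    P.real {ω | ∑ i ∈ range k, A i ω ≤ ∑ j ∈ range (n - k), B j ω + γ}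
      ≤ exp (-(μ / (2 * γ)) ^ 2 * t) := by
  have hμ : 0 < μ := pos_of_mul_pos_left (hγ.trans_le hγn) (sqrt_nonneg _)
  have hn : 0 < √n := pos_of_mul_pos_right (hγ.trans_le hγn) hμ.le
  have hε : t * μ * √n ≤ ((k : ℝ) - (n - k : ℕ)) * μ - γ := by
    rw [Nat.cast_sub hkn]; nlinarith
  refine (measureReal_sum_range_le_sum_range_add_le hindep hmA hmB hA hB hμA hμB k (n - k)
    (by linarith [mul_nonneg (mul_nonneg (zero_le_one.trans ht) hμ.le) hn.le])).trans
    (exp_le_exp.2 ?_)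
  generalize ((k : ℝ) - (n - k : ℕ)) * μ - γ = ε at hε ⊢
  have hε_sq : t * μ ^ 2 * √n ^ 2 ≤ ε ^ 2 := by
    nlinarith [pow_le_pow_left₀ (by positivity) hε 2]
  have hrhs : (μ / (2 * γ)) ^ 2 * t * (√n ^ 2 * γ ^ 2) = t * μ ^ 2 * √n ^ 2 / 4 := by
    field_simp; ring
  rw [← Nat.cast_add, Nat.add_sub_cancel' hkn, sub_zero, ← sq_sqrt n.cast_nonneg,
    div_le_iff₀ (by positivity), neg_mul, neg_mul, neg_mul, hrhs]
  nlinarith [mul_nonneg (zero_le_one.trans ht) (sq_nonneg (μ * √n))]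

end Hoeffding

theorem greedy_selection_tail_bound_general
    {Ω : Type} [MeasurableSpace Ω] (P : Measure Ω) [IsProbabilityMeasure P]
    (XR XS : ℕ → Ω → ℝ) (γ μ : ℝ)
    (hγ : 0 < γ) (hμ : 0 < μ)
    (hmR : ∀ i, Measurable (XR i)) (hmS : ∀ i, Measurable (XS i))
    (hbR : ∀ i ω, XR i ω ∈ Set.Icc (0 : ℝ) γ) (hbS : ∀ i ω, XS i ω ∈ Set.Icc (0 : ℝ) γ)
    (hidR : ∀ i, P.map (XR i) = P.map (XR 0)) (hidS : ∀ i, P.map (XS i) = P.map (XS 0))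
    (hindep : ProbabilityTheory.iIndepFun (Sum.elim XR XS) P)
    (hmeanR : ∫ ω, XR 0 ω ∂P = μ) (hmeanS : ∫ ω, XS 0 ω ∂P = μ)
    (RG : ℕ → Ω → ℕ) (hRG0 : ∀ ω, RG 0 ω = 0)
    (hg1 : ∀ n ω, (∑ i ∈ Finset.range (RG n ω), XR i ω)
        < ∑ j ∈ Finset.range (n - RG n ω), XS j ω → RG (n + 1) ω = RG n ω + 1)
    (hg0 : ∀ n ω, (∑ j ∈ Finset.range (n - RG n ω), XS j ω)
        < ∑ i ∈ Finset.range (RG n ω), XR i ω → RG (n + 1) ω = RG n ω)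
    (hgeq : ∀ n ω, (∑ j ∈ Finset.range (n - RG n ω), XS j ω)
        = ∑ i ∈ Finset.range (RG n ω), XR i ω → RG (n + 1) ω = RG n ω + 1) :
    ∀ t : ℝ, 1 ≤ t → ∀ n : ℕ, (2 + γ / μ) ^ 2 ≤ (n : ℝ) →
      P {ω | t * Real.sqrt n < |(RG n ω : ℝ) - n / 2|}
        ≤ ENNReal.ofReal (2 * Real.exp (-(μ / (2 * γ)) ^ 2 * t)) := by
  intro t ht n hn
  have hgreedy (ω : Ω) : IsGreedySelection (XR · ω) (XS · ω) (RG · ω) :=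
    ⟨hRG0 ω, (hg1 · ω), (hg0 · ω), (hgeq · ω)⟩
  have hμR (i : ℕ) : P[XR i] = μ :=
    (IdentDistrib.mk (hmR i).aemeasurable (hmR 0).aemeasurable (hidR i)).integral_eq.trans hmeanR
  have hμS (j : ℕ) : P[XS j] = μ :=
    (IdentDistrib.mk (hmS j).aemeasurable (hmS 0).aemeasurable (hidS j)).integral_eq.trans hmeanS
  have hγn : γ ≤ μ * Real.sqrt n := by
    have := Real.le_sqrt_of_sq_le hn
    rw [← div_le_iff₀' hμ]
    linarith
  set k := ⌈(n : ℝ) / 2 + t * Real.sqrt n⌉₊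
  have htail (ω : Ω) (hω : ω ∈ {ω | t * Real.sqrt n < |(RG n ω : ℝ) - n / 2|}) :=
    (hgreedy ω).le_and_sum_range_le_of_lt_abs_sub_half (hbR · ω) (hbS · ω) le_rfl hω
  by_cases hkn : k ≤ n
  · have hR := measureReal_sum_range_le_sum_range_sub_add_le hindep (hmR · |>.aemeasurable)
      (hmS · |>.aemeasurable) (ae_of_all P <| hbR ·) (ae_of_all P <| hbS ·) hμR hμS hγ ht hγn
      (Nat.le_ceil _) hkn
    have hS := measureReal_sum_range_le_sum_range_sub_add_le hindep.sum_elim_swap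
      (hmS · |>.aemeasurable) (hmR · |>.aemeasurable) (ae_of_all P <| hbS ·)
      (ae_of_all P <| hbR ·) hμS hμR hγ ht hγn (Nat.le_ceil _) hkn
    rw [← ofReal_measureReal]
    exact ENNReal.ofReal_le_ofReal <| (measureReal_mono fun ω hω ↦ (htail ω hω).2).trans <|
      (measureReal_union_le _ _).trans <| (add_le_add hR hS).trans_eq (two_mul _).symm
  · exact (measure_mono_null (fun ω hω ↦ (hkn (htail ω hω).1).elim) measure_empty).trans_le
      zero_le

/-- Exponential tail bound for the greedy selection count: for `t ≥ 1` and
`n ≥ (2 + γ/μ)²`, `Pr(|R_G(n) - n/2| > t√n) ≤ 2 exp(-(μ/(2γ))² t)`. -/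
theorem greedy_selection_tail_bound
    {Ω : Type} [MeasurableSpace Ω] (P : Measure Ω) [IsProbabilityMeasure P]
    (XR XS : ℕ → Ω → ℝ) (γ μ vR vS : ℝ)
    (hγ : 0 < γ) (hμ : 0 < μ) (hv : 0 < vR + vS)
    (hmR : ∀ i, Measurable (XR i)) (hmS : ∀ i, Measurable (XS i))
    (hbR : ∀ i ω, XR i ω ∈ Set.Icc (0 : ℝ) γ) (hbS : ∀ i ω, XS i ω ∈ Set.Icc (0 : ℝ) γ)
    (hidR : ∀ i, P.map (XR i) = P.map (XR 0)) (hidS : ∀ i, P.map (XS i) = P.map (XS 0))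
    (hindep : ProbabilityTheory.iIndepFun (Sum.elim XR XS) P)
    (hmeanR : ∫ ω, XR 0 ω ∂P = μ) (hmeanS : ∫ ω, XS 0 ω ∂P = μ)
    (hvR : ProbabilityTheory.variance (XR 0) P = vR)
    (hvS : ProbabilityTheory.variance (XS 0) P = vS)
    (RG : ℕ → Ω → ℕ) (hRGmeas : ∀ n, Measurable (RG n)) (hRG0 : ∀ ω, RG 0 ω = 0)
    (hstep : ∀ n ω, RG (n + 1) ω = RG n ω ∨ RG (n + 1) ω = RG n ω + 1)
    (hg1 : ∀ n ω, (∑ i ∈ Finset.range (RG n ω), XR i ω)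
        < ∑ j ∈ Finset.range (n - RG n ω), XS j ω → RG (n + 1) ω = RG n ω + 1)
    (hg0 : ∀ n ω, (∑ j ∈ Finset.range (n - RG n ω), XS j ω)
        < ∑ i ∈ Finset.range (RG n ω), XR i ω → RG (n + 1) ω = RG n ω)
    (hgeq : ∀ n ω, (∑ j ∈ Finset.range (n - RG n ω), XS j ω)
        = ∑ i ∈ Finset.range (RG n ω), XR i ω → RG (n + 1) ω = RG n ω + 1) :
    ∀ t : ℝ, 1 ≤ t → ∀ n : ℕ, (2 + γ / μ) ^ 2 ≤ (n : ℝ) →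
      P {ω | t * Real.sqrt n < |(RG n ω : ℝ) - n / 2|}
        ≤ ENNReal.ofReal (2 * Real.exp (-(μ / (2 * γ)) ^ 2 * t)) :=
  greedy_selection_tail_bound_general P XR XS γ μ hγ hμ hmR hmS hbR hbS hidR hidS hindep hmeanR
    hmeanS RG hRG0 hg1 hg0 hgeq
end

section
/- For any greedy policy (excluding versions with unnecessary path dependence on ambivalent epochs), E(M_G(n)) = (1/2) Σ_{k=1}^{n−1} E|Γ_R[R_G(k)] − Γ_S[S_G(k)]| + n(n−1)μ/4. -/
/-!
Given the first `m` R-labels and `k` S-labels, one knows whether the greedy path passes through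
`(m, k)` and which way it turns there, while the label of the next R-item (or S-item) is
independent of all of them and can be integrated out. A new R-item matches each of the `k` old
S-items with the probability `r` of that item's label, so its expected gain is `Γ_S[k]`;
symmetrically a new S-item gains `Γ_R[m]`. Hence `E M_G(n+1) - E M_G(n) = E max(Γ_R, Γ_S)`,
and `max x y = |x - y| / 2 + (x + y) / 2`. The same integration shows that every step adds
`μ = ∑ r_c s_c` to `E (Γ_R + Γ_S)`, which is therefore `n μ`; summing over the steps gives the
formula.
-/

open MeasureTheory ProbabilityTheory
open scoped ENNReal

section Freezing

variable {Ω β : Type*} {m₀ mΩ : MeasurableSpace Ω} {P : Measure Ω}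
  [Countable β] [MeasurableSpace β] [MeasurableSingletonClass β]

theorem lintegral_apply_eq_tsum_setLIntegral {g : Ω → β} (hg : Measurable g)
    (H : β → Ω → ℝ≥0∞) :
    ∫⁻ ω, H (g ω) ω ∂P = ∑' b, ∫⁻ ω in g ⁻¹' {b}, H b ω ∂P := by
  have hcover : ⋃ b, g ⁻¹' {b} = Set.univ := by
    rw [← Set.preimage_iUnion, Set.iUnion_of_singleton, Set.preimage_univ]
  rw [← setLIntegral_univ, ← hcover, lintegral_iUnion (fun b => hg (measurableSet_singleton b))
    fun a b hab => (Set.disjoint_singleton.2 hab).preimage g]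
  exact tsum_congr fun b => setLIntegral_congr_fun (hg (measurableSet_singleton b))
    fun ω (hω : g ω = b) => by simp only [hω]

theorem lintegral_apply_eq_lintegral_tsum_of_indep (hm₀ : m₀ ≤ mΩ) {X : Ω → β}
    (hX : Measurable X) (hind : Indep (MeasurableSpace.comap X inferInstance) m₀ P)
    {F : β → Ω → ℝ≥0∞} (hF : ∀ b, Measurable[m₀] (F b)) :
    ∫⁻ ω, F (X ω) ω ∂P = ∫⁻ ω, ∑' b, P (X ⁻¹' {b}) * F b ω ∂P := by
  have hfiber : ∀ b, MeasurableSet[MeasurableSpace.comap X inferInstance] (X ⁻¹' {b}) :=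
    fun b => ⟨{b}, measurableSet_singleton b, rfl⟩
  have hsplit : ∀ ω, F (X ω) ω = ∑' b, (X ⁻¹' {b}).indicator 1 ω * F b ω := fun ω => by
    rw [tsum_eq_single (X ω) fun b hb => by simp [Ne.symm hb]]
    simp
  calc ∫⁻ ω, F (X ω) ω ∂P
      = ∑' b, ∫⁻ ω, (X ⁻¹' {b}).indicator 1 ω * F b ω ∂P := by
        simp_rw [hsplit]
        exact lintegral_tsum fun b =>
          ((measurable_one.indicator (hX (measurableSet_singleton b))).mul
            ((hF b).mono hm₀ le_rfl)).aemeasurable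
    _ = ∑' b, ∫⁻ ω, P (X ⁻¹' {b}) * F b ω ∂P := by
        refine tsum_congr fun b => ?_
        rw [lintegral_mul_eq_lintegral_mul_lintegral_of_independent_measurableSpace
          hX.comap_le hm₀ hind
          (Measurable.indicator (f := (1 : Ω → ℝ≥0∞)) measurable_const (hfiber b)) (hF b),
          lintegral_indicator_one (hX (measurableSet_singleton b)),
          lintegral_const_mul _ ((hF b).mono hm₀ le_rfl)]
    _ = ∫⁻ ω, ∑' b, P (X ⁻¹' {b}) * F b ω ∂P :=
        (lintegral_tsum fun b => (((hF b).mono hm₀ le_rfl).const_mul _).aemeasurable).symm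

theorem setLIntegral_apply_eq_setLIntegral_tsum_of_indep (hm₀ : m₀ ≤ mΩ) {X : Ω → β}
    (hX : Measurable X) (hind : Indep (MeasurableSpace.comap X inferInstance) m₀ P)
    {F : β → Ω → ℝ≥0∞} (hF : ∀ b, Measurable[m₀] (F b)) {A : Set Ω}
    (hA : MeasurableSet[m₀] A) :
    ∫⁻ ω in A, F (X ω) ω ∂P = ∫⁻ ω in A, ∑' b, P (X ⁻¹' {b}) * F b ω ∂P := by
  have h := lintegral_apply_eq_lintegral_tsum_of_indep hm₀ hX hind
    (F := fun b => A.indicator (F b)) fun b => (hF b).indicator hA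
  rw [← lintegral_indicator (hm₀ _ hA), ← lintegral_indicator (hm₀ _ hA)]
  convert h using 2 <;> funext ω <;> by_cases hω : ω ∈ A <;> simp [hω]

end Freezing

theorem measurable_apply_of_measurable {Ω β γ : Type*} [MeasurableSpace Ω] [MeasurableSpace γ]
    [Countable β] [MeasurableSpace β] [MeasurableSingletonClass β] {g : Ω → β}
    (hg : Measurable g) {H : β → Ω → γ} (hH : ∀ b, Measurable (H b)) :
    Measurable fun ω => H (g ω) ω :=
  (measurable_from_prod_countable_left (f := fun p : Ω × β => H p.2 p.1) hH).comp
    (measurable_id.prodMk hg)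

theorem tsum_measure_preimage_singleton_eq_one {Ω : Type*} [MeasurableSpace Ω] {P : Measure Ω}
    [IsProbabilityMeasure P] {X : Ω → ℕ} (hX : Measurable X) :
    ∑' c, P (X ⁻¹' {c}) = 1 := by
  rw [← measure_iUnion (fun a b hab => (Set.disjoint_singleton.2 hab).preimage X)
    fun c => hX (measurableSet_singleton c), ← Set.preimage_iUnion, Set.iUnion_of_singleton,
    Set.preimage_univ, measure_univ]

theorem tsum_ofReal_mul_ofReal_eq {Ω : Type*} [MeasurableSpace Ω] {P : Measure Ω}
    [IsProbabilityMeasure P] {r s : ℕ → ℝ} {X : Ω → ℕ} (hX : Measurable X)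
    (hr : ∀ c, 0 ≤ r c) (hs : ∀ c, 0 ≤ s c) (hs1 : ∀ c, s c ≤ 1)
    (hdX : ∀ c, P (X ⁻¹' {c}) = ENNReal.ofReal (r c)) :
    ∑' c, ENNReal.ofReal (r c) * ENNReal.ofReal (s c) = ENNReal.ofReal (∑' c, r c * s c) := by
  have hsum : Summable r := by
    have h := ENNReal.summable_toReal (f := fun c => ENNReal.ofReal (r c))
      (by simp_rw [← hdX, tsum_measure_preimage_singleton_eq_one hX]; exact ENNReal.one_ne_top)
    simpa only [ENNReal.toReal_ofReal (hr _)] using h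
  rw [ENNReal.ofReal_tsum_of_nonneg (fun c => mul_nonneg (hr c) (hs c))
    (hsum.of_nonneg_of_le (fun c => mul_nonneg (hr c) (hs c))
      fun c => mul_le_of_le_one_right (hr c) (hs1 c))]
  exact tsum_congr fun c => (ENNReal.ofReal_mul (hr c)).symm

theorem tsum_mul_natCast_sum_ite_eq {ι : Type*} (p : ℕ → ℝ≥0∞) (K : Finset ι) (y : ι → ℕ) :
    ∑' c, p c * ((∑ j ∈ K, if c = y j then 1 else 0 : ℕ) : ℝ≥0∞) = ∑ j ∈ K, p (y j) := by
  simp only [Nat.cast_sum, Nat.cast_ite, Nat.cast_one, Nat.cast_zero, Finset.mul_sum, mul_ite,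
    mul_one, mul_zero]
  rw [Summable.tsum_finsetSum fun _ _ => ENNReal.summable]
  exact Finset.sum_congr rfl fun j _ => tsum_ite_eq (y j) _

theorem sum_range_half_add_eq {D : ℕ → ℝ} (hD : D 0 = 0) (μ : ℝ) (n : ℕ) :
    ∑ k ∈ Finset.range n, ((1 / 2) * D k + k * μ / 2) =
      (1 / 2) * ∑ k ∈ Finset.Ico 1 n, D k + n * (n - 1) * μ / 4 := by
  induction n with
  | zero => simp
  | succ n ih =>
    rw [Finset.sum_range_succ, ih]
    rcases n.eq_zero_or_pos with rfl | hn
    · simp [hD]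
    · rw [Finset.sum_Ico_succ_top hn]
      push_cast
      ring

section Labels

variable {Ω : Type*}

/-- `Γ_R[m] = prefixWeight s LR m` and `Γ_S[k] = prefixWeight r LS k`: an R-item with label `c`
matches a random S-item with probability `s c`, and vice versa. -/
def prefixWeight (w : ℕ → ℝ) (L : ℕ → Ω → ℕ) (m : ℕ) (ω : Ω) : ℝ :=
  ∑ i ∈ Finset.range m, w (L i ω)

theorem prefixWeight_succ (w : ℕ → ℝ) (L : ℕ → Ω → ℕ) (m : ℕ) (ω : Ω) :
    prefixWeight w L (m + 1) ω = prefixWeight w L m ω + w (L m ω) :=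
  Finset.sum_range_succ _ _

theorem prefixWeight_nonneg {w : ℕ → ℝ} (hw : ∀ c, 0 ≤ w c) (L : ℕ → Ω → ℕ) (m : ℕ) (ω : Ω) :
    0 ≤ prefixWeight w L m ω :=
  Finset.sum_nonneg fun _ _ => hw _

theorem ofReal_prefixWeight {w : ℕ → ℝ} (hw : ∀ c, 0 ≤ w c) (L : ℕ → Ω → ℕ) (m : ℕ) (ω : Ω) :
    ENNReal.ofReal (prefixWeight w L m ω) = ∑ i ∈ Finset.range m, ENNReal.ofReal (w (L i ω)) :=
  ENNReal.ofReal_sum_of_nonneg fun _ _ => hw _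

theorem measurable_prefixWeight {m₀ : MeasurableSpace Ω} (w : ℕ → ℝ) {L : ℕ → Ω → ℕ} {m : ℕ}
    (hL : ∀ i < m, Measurable (L i)) : Measurable (prefixWeight w L m) :=
  Finset.measurable_sum _ fun i hi =>
    (measurable_of_countable w).comp (hL i (Finset.mem_range.1 hi))

variable {LR LS : ℕ → Ω → ℕ}

def matchCount (LR LS : ℕ → Ω → ℕ) (m k : ℕ) (ω : Ω) : ℕ :=
  ∑ i ∈ Finset.range m, ∑ j ∈ Finset.range k, if LR i ω = LS j ω then 1 else 0

theorem matchCount_succ_left (m k : ℕ) (ω : Ω) :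
    matchCount LR LS (m + 1) k ω =
      matchCount LR LS m k ω + ∑ j ∈ Finset.range k, if LR m ω = LS j ω then 1 else 0 :=
  Finset.sum_range_succ _ _

theorem matchCount_succ_right (m k : ℕ) (ω : Ω) :
    matchCount LR LS m (k + 1) ω =
      matchCount LR LS m k ω + ∑ i ∈ Finset.range m, if LR i ω = LS k ω then 1 else 0 := by
  simp only [matchCount, Finset.sum_range_succ, Finset.sum_add_distrib]

theorem measurable_matchCount {m₀ : MeasurableSpace Ω} {m k : ℕ}
    (hmLR : ∀ i < m, Measurable (LR i)) (hmLS : ∀ j < k, Measurable (LS j)) :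
    Measurable (matchCount LR LS m k) :=
  Finset.measurable_sum _ fun i hi => Finset.measurable_sum _ fun j hj =>
    measurable_of_countable (fun p : ℕ × ℕ => if p.1 = p.2 then 1 else 0) |>.comp
      ((hmLR i (Finset.mem_range.1 hi)).prodMk (hmLS j (Finset.mem_range.1 hj)))

theorem measurable_natCast_sum_ite {m₀ : MeasurableSpace Ω} {L : ℕ → Ω → ℕ} {k : ℕ}
    (hL : ∀ j < k, Measurable (L j)) (c : ℕ) :
    Measurable fun ω => ((∑ j ∈ Finset.range k, if c = L j ω then 1 else 0 : ℕ) : ℝ≥0∞) :=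
  (measurable_of_countable _).comp <| Finset.measurable_sum _ fun j hj =>
    (measurable_of_countable fun b => if c = b then 1 else 0).comp (hL j (Finset.mem_range.1 hj))

abbrev pastSigma (LR LS : ℕ → Ω → ℕ) (m k : ℕ) : MeasurableSpace Ω :=
  ⨆ x ∈ {x : ℕ ⊕ ℕ | x.elim (· < m) (· < k)},
    MeasurableSpace.comap (Sum.elim LR LS x) inferInstance

theorem measurable_pastSigma_left {m k i : ℕ} (hi : i < m) :
    Measurable[pastSigma LR LS m k] (LR i) :=
  Measurable.of_comap_le (le_iSup₂_of_le (f := fun x _ =>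
    MeasurableSpace.comap (Sum.elim LR LS x) inferInstance) (Sum.inl i) hi le_rfl)

theorem measurable_pastSigma_right {m k j : ℕ} (hj : j < k) :
    Measurable[pastSigma LR LS m k] (LS j) :=
  Measurable.of_comap_le (le_iSup₂_of_le (f := fun x _ =>
    MeasurableSpace.comap (Sum.elim LR LS x) inferInstance) (Sum.inr j) hj le_rfl)

theorem pastSigma_mono {m m' k k' : ℕ} (hm : m ≤ m') (hk : k ≤ k') :
    pastSigma LR LS m k ≤ pastSigma LR LS m' k' :=
  biSup_mono fun x hx => by
    rcases x with i | j
    exacts [lt_of_lt_of_le hx hm, lt_of_lt_of_le hx hk]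

theorem pastSigma_le [mΩ : MeasurableSpace Ω] (hmLR : ∀ i, Measurable (LR i))
    (hmLS : ∀ j, Measurable (LS j)) {m k : ℕ} : pastSigma LR LS m k ≤ mΩ :=
  iSup₂_le fun x _ => by
    rcases x with i | j
    exacts [(hmLR i).comap_le, (hmLS j).comap_le]

theorem indep_pastSigma [MeasurableSpace Ω] {P : Measure Ω} (hmLR : ∀ i, Measurable (LR i))
    (hmLS : ∀ j, Measurable (LS j)) (hind : iIndepFun (Sum.elim LR LS) P) {m k : ℕ}
    {x : ℕ ⊕ ℕ} (hx : ¬ x.elim (· < m) (· < k)) :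
    Indep (MeasurableSpace.comap (Sum.elim LR LS x) inferInstance) (pastSigma LR LS m k) P := by
  have hmeas : ∀ y, Measurable (Sum.elim LR LS y) := by
    rintro (i | j)
    exacts [hmLR i, hmLS j]
  have h := indep_iSup_of_disjoint (fun y => (hmeas y).comap_le)
    ((iIndepFun_iff_iIndep _ _ _).1 hind) (Set.disjoint_singleton_left.2 hx)
  rwa [iSup_singleton] at h

structure IIDLabels [MeasurableSpace Ω] (P : Measure Ω) (r s : ℕ → ℝ) (LR LS : ℕ → Ω → ℕ) :
    Prop where
  measurable_left : ∀ i, Measurable (LR i)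
  measurable_right : ∀ j, Measurable (LS j)
  indep : iIndepFun (Sum.elim LR LS) P
  nonneg_left : ∀ c, 0 ≤ r c
  nonneg_right : ∀ c, 0 ≤ s c
  law_left : ∀ i c, P (LR i ⁻¹' {c}) = ENNReal.ofReal (r c)
  law_right : ∀ j c, P (LS j ⁻¹' {c}) = ENNReal.ofReal (s c)

theorem IIDLabels.le_one_right [MeasurableSpace Ω] {P : Measure Ω} [IsProbabilityMeasure P]
    {r s : ℕ → ℝ} (hL : IIDLabels P r s LR LS) (c : ℕ) : s c ≤ 1 :=
  ENNReal.ofReal_le_one.1 (hL.law_right 0 c ▸ prob_le_one)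

end Labels

section Greedy

variable {Ω : Type*} {r s : ℕ → ℝ} {LR LS RG : ℕ → Ω → ℕ}

variable (r s LR LS RG) in
/-- `RG n ω` is `R_G(n)`, the number of R-items among the first `n` arrivals. -/
structure IsGreedyPath : Prop where
  zero : ∀ ω, RG 0 ω = 0
  succ : ∀ n ω, RG (n + 1) ω =
    if prefixWeight s LR (RG n ω) ω ≤ prefixWeight r LS (n - RG n ω) ω then RG n ω + 1
    else RG n ω

namespace IsGreedyPath

theorem le (hG : IsGreedyPath r s LR LS RG) (n : ℕ) (ω : Ω) : RG n ω ≤ n := by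
  induction n with
  | zero => rw [hG.zero]
  | succ n ih => rw [hG.succ]; split_ifs <;> omega

theorem apply_succ {β : Type*} (hG : IsGreedyPath r s LR LS RG) (V : ℕ → ℕ → Ω → β) (n : ℕ)
    (ω : Ω) :
    V (RG (n + 1) ω) (n + 1 - RG (n + 1) ω) ω =
      if prefixWeight s LR (RG n ω) ω ≤ prefixWeight r LS (n - RG n ω) ω then
        V (RG n ω + 1) (n - RG n ω) ω
      else V (RG n ω) (n - RG n ω + 1) ω := by
  rw [hG.succ]
  split_ifs
  · rw [Nat.add_sub_add_right]
  · rw [Nat.sub_add_comm (hG.le n ω)]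

/-- The path reaches `(m, n + 1 - m)` only from `(m, n - m)` or `(m - 1, n + 1 - m)`, and the
turn taken there is decided by the labels seen so far. -/
theorem measurableSet_eq (hG : IsGreedyPath r s LR LS RG) (n m : ℕ) :
    MeasurableSet[pastSigma LR LS m (n - m)] {ω | RG n ω = m} := by
  induction n generalizing m with
  | zero =>
    simp_rw [hG.zero]
    exact MeasurableSet.const _
  | succ n ih =>
    have hturn : ∀ a, MeasurableSet[pastSigma LR LS a (n - a)]
        {ω | prefixWeight s LR a ω ≤ prefixWeight r LS (n - a) ω} := fun a =>
      measurableSet_le (measurable_prefixWeight s fun _ hi => measurable_pastSigma_left hi)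
        (measurable_prefixWeight r fun _ hj => measurable_pastSigma_right hj)
    cases m with
    | zero =>
      have hset : {ω | RG (n + 1) ω = 0} =
          {ω | RG n ω = 0} ∩ {ω | prefixWeight s LR 0 ω ≤ prefixWeight r LS (n - 0) ω}ᶜ := by
        ext ω
        simp only [Set.mem_ofPred_eq, Set.mem_inter_iff, Set.mem_compl_iff, hG.succ]
        grind
      rw [hset]
      exact pastSigma_mono le_rfl (by omega) _ ((ih 0).inter (hturn 0).compl)
    | succ m =>
      have hset : {ω | RG (n + 1) ω = m + 1} =
          ({ω | RG n ω = m + 1} ∩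
            {ω | prefixWeight s LR (m + 1) ω ≤ prefixWeight r LS (n - (m + 1)) ω}ᶜ) ∪
          ({ω | RG n ω = m} ∩ {ω | prefixWeight s LR m ω ≤ prefixWeight r LS (n - m) ω}) := by
        ext ω
        simp only [Set.mem_ofPred_eq, Set.mem_inter_iff, Set.mem_compl_iff, Set.mem_union,
          hG.succ]
        grind
      rw [hset]
      exact MeasurableSet.union
        (pastSigma_mono le_rfl (by omega) _ ((ih (m + 1)).inter (hturn (m + 1)).compl))
        (pastSigma_mono (by omega) (by omega) _ ((ih m).inter (hturn m)))

variable [MeasurableSpace Ω] {P : Measure Ω}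

theorem measurable (hG : IsGreedyPath r s LR LS RG) (hmLR : ∀ i, Measurable (LR i))
    (hmLS : ∀ j, Measurable (LS j)) (n : ℕ) : Measurable (RG n) :=
  measurable_to_countable' fun m => pastSigma_le hmLR hmLS _ (hG.measurableSet_eq n m)

theorem measurable_prefixWeight_left (hG : IsGreedyPath r s LR LS RG)
    (hmLR : ∀ i, Measurable (LR i)) (hmLS : ∀ j, Measurable (LS j)) (w : ℕ → ℝ) (n : ℕ) :
    Measurable fun ω => prefixWeight w LR (RG n ω) ω :=
  measurable_apply_of_measurable (hG.measurable hmLR hmLS n) fun _ =>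
    measurable_prefixWeight w fun i _ => hmLR i

theorem measurable_prefixWeight_right (hG : IsGreedyPath r s LR LS RG)
    (hmLR : ∀ i, Measurable (LR i)) (hmLS : ∀ j, Measurable (LS j)) (w : ℕ → ℝ) (n : ℕ) :
    Measurable fun ω => prefixWeight w LS (n - RG n ω) ω :=
  measurable_apply_of_measurable (hG.measurable hmLR hmLS n) fun _ =>
    measurable_prefixWeight w fun j _ => hmLS j

end IsGreedyPath

variable [MeasurableSpace Ω] {P : Measure Ω}

/-- Both `A` and the branch are decided by the past at `(m, k)`, while the next labels `LR m`
and `LS k` are independent of it. -/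
theorem setLIntegral_choice_eq_of_indep (hmLR : ∀ i, Measurable (LR i))
    (hmLS : ∀ j, Measurable (LS j)) (hind : iIndepFun (Sum.elim LR LS) P) {m k : ℕ}
    {A : Set Ω} (hA : MeasurableSet[pastSigma LR LS m k] A) {φ ψ : ℕ → Ω → ℝ≥0∞}
    (hφ : ∀ c, Measurable[pastSigma LR LS m k] (φ c))
    (hψ : ∀ c, Measurable[pastSigma LR LS m k] (ψ c)) :
    ∫⁻ ω in A, (if prefixWeight s LR m ω ≤ prefixWeight r LS k ω then φ (LR m ω) ω
        else ψ (LS k ω) ω) ∂P =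
      ∫⁻ ω in A, (if prefixWeight s LR m ω ≤ prefixWeight r LS k ω then
        ∑' c, P (LR m ⁻¹' {c}) * φ c ω else ∑' c, P (LS k ⁻¹' {c}) * ψ c ω) ∂P := by
  have hle := pastSigma_le hmLR hmLS (m := m) (k := k)
  set B := {ω | prefixWeight s LR m ω ≤ prefixWeight r LS k ω}
  have hB : MeasurableSet[pastSigma LR LS m k] B :=
    measurableSet_le (measurable_prefixWeight s fun _ hi => measurable_pastSigma_left hi)
      (measurable_prefixWeight r fun _ hj => measurable_pastSigma_right hj)
  rw [← lintegral_inter_add_sdiff _ A (hle _ hB), ← lintegral_inter_add_sdiff _ A (hle _ hB)]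
  congr 1
  · calc _ = ∫⁻ ω in A ∩ B, φ (LR m ω) ω ∂P :=
          setLIntegral_congr_fun (hle _ (hA.inter hB)) fun ω hω => if_pos hω.2
      _ = ∫⁻ ω in A ∩ B, ∑' c, P (LR m ⁻¹' {c}) * φ c ω ∂P :=
          setLIntegral_apply_eq_setLIntegral_tsum_of_indep hle (hmLR m)
            (indep_pastSigma hmLR hmLS hind (x := .inl m) (lt_irrefl m)) hφ (hA.inter hB)
      _ = _ := setLIntegral_congr_fun (hle _ (hA.inter hB)) fun ω hω => (if_pos hω.2).symm
  · calc _ = ∫⁻ ω in A \ B, ψ (LS k ω) ω ∂P :=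
          setLIntegral_congr_fun (hle _ (hA.diff hB)) fun ω hω => if_neg hω.2
      _ = ∫⁻ ω in A \ B, ∑' c, P (LS k ⁻¹' {c}) * ψ c ω ∂P :=
          setLIntegral_apply_eq_setLIntegral_tsum_of_indep hle (hmLS k)
            (indep_pastSigma hmLR hmLS hind (x := .inr k) (lt_irrefl k)) hψ (hA.diff hB)
      _ = _ := setLIntegral_congr_fun (hle _ (hA.diff hB)) fun ω hω => (if_neg hω.2).symm

namespace IsGreedyPath

theorem lintegral_succ (hG : IsGreedyPath r s LR LS RG)
    (hmLR : ∀ i, Measurable (LR i)) (hmLS : ∀ j, Measurable (LS j))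
    (hind : iIndepFun (Sum.elim LR LS) P) {V : ℕ → ℕ → Ω → ℝ≥0∞}
    {φ ψ : ℕ → ℕ → ℕ → Ω → ℝ≥0∞} (hV : ∀ m k, Measurable (V m k))
    (hφ : ∀ m k c, Measurable[pastSigma LR LS m k] (φ m k c))
    (hψ : ∀ m k c, Measurable[pastSigma LR LS m k] (ψ m k c))
    (hVR : ∀ m k ω, V (m + 1) k ω = V m k ω + φ m k (LR m ω) ω)
    (hVS : ∀ m k ω, V m (k + 1) ω = V m k ω + ψ m k (LS k ω) ω) (n : ℕ) :
    ∫⁻ ω, V (RG (n + 1) ω) (n + 1 - RG (n + 1) ω) ω ∂P =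
      ∫⁻ ω, V (RG n ω) (n - RG n ω) ω ∂P +
        ∫⁻ ω, (if prefixWeight s LR (RG n ω) ω ≤ prefixWeight r LS (n - RG n ω) ω then
            ∑' c, P (LR (RG n ω) ⁻¹' {c}) * φ (RG n ω) (n - RG n ω) c ω
          else ∑' c, P (LS (n - RG n ω) ⁻¹' {c}) * ψ (RG n ω) (n - RG n ω) c ω) ∂P := by
  have hRG := hG.measurable hmLR hmLS n
  simp_rw [hG.apply_succ V n, hVR, hVS, ← add_ite]
  rw [lintegral_add_left (measurable_apply_of_measurable hRG fun m => hV m (n - m))]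
  congr 1
  rw [lintegral_apply_eq_tsum_setLIntegral hRG fun m ω =>
      if prefixWeight s LR m ω ≤ prefixWeight r LS (n - m) ω then φ m (n - m) (LR m ω) ω
      else ψ m (n - m) (LS (n - m) ω) ω,
    lintegral_apply_eq_tsum_setLIntegral hRG fun m ω =>
      if prefixWeight s LR m ω ≤ prefixWeight r LS (n - m) ω then
        ∑' c, P (LR m ⁻¹' {c}) * φ m (n - m) c ω
      else ∑' c, P (LS (n - m) ⁻¹' {c}) * ψ m (n - m) c ω]
  exact tsum_congr fun m => setLIntegral_choice_eq_of_indep hmLR hmLS hind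
    (hG.measurableSet_eq n m) (hφ m (n - m)) (hψ m (n - m))

theorem lintegral_matchCount_succ (hG : IsGreedyPath r s LR LS RG)
    (hL : IIDLabels P r s LR LS) (n : ℕ) :
    ∫⁻ ω, (matchCount LR LS (RG (n + 1) ω) (n + 1 - RG (n + 1) ω) ω : ℝ≥0∞) ∂P =
      ∫⁻ ω, (matchCount LR LS (RG n ω) (n - RG n ω) ω : ℝ≥0∞) ∂P +
        ∫⁻ ω, ENNReal.ofReal
          (max (prefixWeight s LR (RG n ω) ω) (prefixWeight r LS (n - RG n ω) ω)) ∂P := by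
  rw [hG.lintegral_succ hL.measurable_left hL.measurable_right hL.indep
    (V := fun m k ω => (matchCount LR LS m k ω : ℝ≥0∞))
    (φ := fun _ k c ω => ((∑ j ∈ Finset.range k, if c = LS j ω then 1 else 0 : ℕ) : ℝ≥0∞))
    (ψ := fun m _ c ω => ((∑ i ∈ Finset.range m, if c = LR i ω then 1 else 0 : ℕ) : ℝ≥0∞))
    (fun _ _ => (measurable_of_countable _).comp (measurable_matchCount
      (fun i _ => hL.measurable_left i) (fun j _ => hL.measurable_right j)))
    (fun _ _ => measurable_natCast_sum_ite fun _ hj => measurable_pastSigma_right hj)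
    (fun _ _ => measurable_natCast_sum_ite fun _ hi => measurable_pastSigma_left hi)
    (fun m k ω => by rw [matchCount_succ_left, Nat.cast_add])
    (fun m k ω => by simp only [matchCount_succ_right, Nat.cast_add, @eq_comm _ (LR _ ω)])]
  congr 1
  refine lintegral_congr fun ω => ?_
  simp only [tsum_mul_natCast_sum_ite_eq]
  split_ifs with h
  · rw [max_eq_right h, ofReal_prefixWeight hL.nonneg_left]
    exact Finset.sum_congr rfl fun j _ => hL.law_left _ _
  · rw [max_eq_left (not_le.1 h).le, ofReal_prefixWeight hL.nonneg_right]
    exact Finset.sum_congr rfl fun i _ => hL.law_right _ _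

theorem lintegral_prefixWeight_succ [IsProbabilityMeasure P] (hG : IsGreedyPath r s LR LS RG)
    (hL : IIDLabels P r s LR LS) (n : ℕ) :
    ∫⁻ ω, ENNReal.ofReal (prefixWeight s LR (RG (n + 1) ω) ω +
        prefixWeight r LS (n + 1 - RG (n + 1) ω) ω) ∂P =
      ∫⁻ ω, ENNReal.ofReal (prefixWeight s LR (RG n ω) ω + prefixWeight r LS (n - RG n ω) ω) ∂P +
        ∑' c, ENNReal.ofReal (r c) * ENNReal.ofReal (s c) := by
  have hnonneg : ∀ m k ω, 0 ≤ prefixWeight s LR m ω + prefixWeight r LS k ω := fun m k ω =>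
    add_nonneg (prefixWeight_nonneg hL.nonneg_right LR m ω)
      (prefixWeight_nonneg hL.nonneg_left LS k ω)
  rw [hG.lintegral_succ hL.measurable_left hL.measurable_right hL.indep
    (V := fun m k ω => ENNReal.ofReal (prefixWeight s LR m ω + prefixWeight r LS k ω))
    (φ := fun _ _ c _ => ENNReal.ofReal (s c)) (ψ := fun _ _ c _ => ENNReal.ofReal (r c))
    (fun _ _ => ((measurable_prefixWeight s fun i _ => hL.measurable_left i).add
      (measurable_prefixWeight r fun j _ => hL.measurable_right j)).ennreal_ofReal)
    (fun _ _ _ => measurable_const) (fun _ _ _ => measurable_const)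
    (fun m k ω => by rw [prefixWeight_succ, add_right_comm,
      ENNReal.ofReal_add (hnonneg m k ω) (hL.nonneg_right _)])
    (fun m k ω => by rw [prefixWeight_succ, ← add_assoc,
      ENNReal.ofReal_add (hnonneg m k ω) (hL.nonneg_left _)])]
  simp only [hL.law_left, hL.law_right, mul_comm (ENNReal.ofReal (s _)), ite_self,
    lintegral_const, measure_univ, mul_one]

variable [IsProbabilityMeasure P]

theorem lintegral_prefixWeight (hG : IsGreedyPath r s LR LS RG) (hL : IIDLabels P r s LR LS)
    (n : ℕ) :
    ∫⁻ ω, ENNReal.ofReal (prefixWeight s LR (RG n ω) ω + prefixWeight r LS (n - RG n ω) ω) ∂P =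
      n * ENNReal.ofReal (∑' c, r c * s c) := by
  induction n with
  | zero => simp [hG.zero, prefixWeight]
  | succ n ih =>
    rw [hG.lintegral_prefixWeight_succ hL, ih, tsum_ofReal_mul_ofReal_eq (hL.measurable_left 0)
      hL.nonneg_left hL.nonneg_right hL.le_one_right (hL.law_left 0)]
    push_cast
    ring

theorem integrable_prefixWeight (hG : IsGreedyPath r s LR LS RG) (hL : IIDLabels P r s LR LS)
    (n : ℕ) :
    Integrable (fun ω => prefixWeight s LR (RG n ω) ω + prefixWeight r LS (n - RG n ω) ω) P := by
  have hm := (hG.measurable_prefixWeight_left hL.measurable_left hL.measurable_right s n).fun_add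
    (hG.measurable_prefixWeight_right hL.measurable_left hL.measurable_right r n)
  refine (lintegral_ofReal_ne_top_iff_integrable hm.aestronglyMeasurable
    (ae_of_all _ fun ω => add_nonneg (prefixWeight_nonneg hL.nonneg_right _ _ _)
      (prefixWeight_nonneg hL.nonneg_left _ _ _))).1 ?_
  rw [hG.lintegral_prefixWeight hL]
  exact ENNReal.mul_ne_top (ENNReal.natCast_ne_top n) ENNReal.ofReal_ne_top

theorem integral_prefixWeight (hG : IsGreedyPath r s LR LS RG) (hL : IIDLabels P r s LR LS)
    (n : ℕ) :
    ∫ ω, (prefixWeight s LR (RG n ω) ω + prefixWeight r LS (n - RG n ω) ω) ∂P =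
      n * ∑' c, r c * s c := by
  have hm := (hG.measurable_prefixWeight_left hL.measurable_left hL.measurable_right s n).fun_add
    (hG.measurable_prefixWeight_right hL.measurable_left hL.measurable_right r n)
  rw [integral_eq_lintegral_of_nonneg_ae (ae_of_all _ fun ω => add_nonneg
      (prefixWeight_nonneg hL.nonneg_right _ _ _) (prefixWeight_nonneg hL.nonneg_left _ _ _))
      hm.aestronglyMeasurable,
    hG.lintegral_prefixWeight hL, ENNReal.toReal_mul, ENNReal.toReal_natCast,
    ENNReal.toReal_ofReal (tsum_nonneg fun c => mul_nonneg (hL.nonneg_left c) (hL.nonneg_right c))]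

theorem integral_max (hG : IsGreedyPath r s LR LS RG) (hL : IIDLabels P r s LR LS) (n : ℕ) :
    ∫ ω, max (prefixWeight s LR (RG n ω) ω) (prefixWeight r LS (n - RG n ω) ω) ∂P =
      (1 / 2) * ∫ ω, |prefixWeight s LR (RG n ω) ω - prefixWeight r LS (n - RG n ω) ω| ∂P +
        n * (∑' c, r c * s c) / 2 := by
  have hm := (hG.measurable_prefixWeight_left hL.measurable_left hL.measurable_right s n).fun_sub
    (hG.measurable_prefixWeight_right hL.measurable_left hL.measurable_right r n)
  have habs : Integrable
      (fun ω => |prefixWeight s LR (RG n ω) ω - prefixWeight r LS (n - RG n ω) ω|) P :=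
    (hG.integrable_prefixWeight hL n).mono' hm.abs.aestronglyMeasurable
      (ae_of_all _ fun ω => by
        have := prefixWeight_nonneg hL.nonneg_right LR (RG n ω) ω
        have := prefixWeight_nonneg hL.nonneg_left LS (n - RG n ω) ω
        rw [Real.norm_eq_abs, abs_abs, abs_sub_le_iff]
        constructor <;> linarith)
  have hmax : ∀ a b : ℝ, max a b = (|a - b| + (a + b)) / 2 := fun a b => by
    linarith [max_sub_min_eq_abs' a b, max_add_min a b]
  simp_rw [hmax]
  rw [integral_div, integral_add habs (hG.integrable_prefixWeight hL n),
    hG.integral_prefixWeight hL]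
  ring

theorem lintegral_matchCount (hG : IsGreedyPath r s LR LS RG) (hL : IIDLabels P r s LR LS)
    (n : ℕ) :
    ∫⁻ ω, (matchCount LR LS (RG n ω) (n - RG n ω) ω : ℝ≥0∞) ∂P =
      ∑ k ∈ Finset.range n, ∫⁻ ω, ENNReal.ofReal
        (max (prefixWeight s LR (RG k ω) ω) (prefixWeight r LS (k - RG k ω) ω)) ∂P := by
  induction n with
  | zero => simp [hG.zero, matchCount]
  | succ n ih => rw [hG.lintegral_matchCount_succ hL, ih, Finset.sum_range_succ]

theorem integral_matchCount (hG : IsGreedyPath r s LR LS RG) (hL : IIDLabels P r s LR LS)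
    (n : ℕ) :
    ∫ ω, (matchCount LR LS (RG n ω) (n - RG n ω) ω : ℝ) ∂P =
      ∑ k ∈ Finset.range n,
        ∫ ω, max (prefixWeight s LR (RG k ω) ω) (prefixWeight r LS (k - RG k ω) ω) ∂P := by
  have hRG := hG.measurable hL.measurable_left hL.measurable_right
  have hmax : ∀ k, Measurable fun ω =>
      max (prefixWeight s LR (RG k ω) ω) (prefixWeight r LS (k - RG k ω) ω) := fun k =>
    (hG.measurable_prefixWeight_left hL.measurable_left hL.measurable_right s k).max
      (hG.measurable_prefixWeight_right hL.measurable_left hL.measurable_right r k)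
  have hmax0 : ∀ k ω,
      0 ≤ max (prefixWeight s LR (RG k ω) ω) (prefixWeight r LS (k - RG k ω) ω) :=
    fun k ω => le_max_of_le_left (prefixWeight_nonneg hL.nonneg_right _ _ _)
  have hfinite : ∀ k, ∫⁻ ω, ENNReal.ofReal
      (max (prefixWeight s LR (RG k ω) ω) (prefixWeight r LS (k - RG k ω) ω)) ∂P ≠ ∞ :=
    fun k => ((hG.integrable_prefixWeight hL k).mono' (hmax k).aestronglyMeasurable
      (ae_of_all _ fun ω => by
        rw [Real.norm_eq_abs, abs_of_nonneg (hmax0 k ω)]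
        exact max_le (le_add_of_nonneg_right (prefixWeight_nonneg hL.nonneg_left _ _ _))
          (le_add_of_nonneg_left (prefixWeight_nonneg hL.nonneg_right _ _ _)))).lintegral_lt_top.ne
  have hM : Measurable fun ω => (matchCount LR LS (RG n ω) (n - RG n ω) ω : ℝ) :=
    measurable_apply_of_measurable (H := fun m ω => (matchCount LR LS m (n - m) ω : ℝ)) (hRG n)
      fun _ => (measurable_of_countable _).comp (measurable_matchCount
        (fun i _ => hL.measurable_left i) (fun j _ => hL.measurable_right j))
  rw [integral_eq_lintegral_of_nonneg_ae (ae_of_all _ fun ω => Nat.cast_nonneg _)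
    hM.aestronglyMeasurable]
  simp_rw [ENNReal.ofReal_natCast]
  rw [hG.lintegral_matchCount hL, ENNReal.toReal_sum fun k _ => hfinite k]
  exact Finset.sum_congr rfl fun k _ =>
    (integral_eq_lintegral_of_nonneg_ae (ae_of_all _ (hmax0 k)) (hmax k).aestronglyMeasurable).symm

end IsGreedyPath

end Greedy

theorem greedy_expected_matches_formula_general
    {Ω : Type} [MeasurableSpace Ω] (P : Measure Ω) [IsProbabilityMeasure P]
    (LR LS : ℕ → Ω → ℕ) (r s : ℕ → ℝ) (μ : ℝ)
    (hmLR : ∀ i, Measurable (LR i)) (hmLS : ∀ i, Measurable (LS i))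
    (hr : ∀ j, 0 ≤ r j) (hs : ∀ j, 0 ≤ s j)
    (hdR : ∀ i j, P {ω | LR i ω = j} = ENNReal.ofReal (r j))
    (hdS : ∀ i j, P {ω | LS i ω = j} = ENNReal.ofReal (s j))
    (hindep : ProbabilityTheory.iIndepFun (Sum.elim LR LS) P)
    (hμ : μ = ∑' j, r j * s j)
    (RG : ℕ → Ω → ℕ) (hRG0 : ∀ ω, RG 0 ω = 0)
    (hg1 : ∀ n ω, (∑ i ∈ Finset.range (RG n ω), s (LR i ω))
        < ∑ j ∈ Finset.range (n - RG n ω), r (LS j ω) → RG (n + 1) ω = RG n ω + 1)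
    (hg0 : ∀ n ω, (∑ j ∈ Finset.range (n - RG n ω), r (LS j ω))
        < ∑ i ∈ Finset.range (RG n ω), s (LR i ω) → RG (n + 1) ω = RG n ω)
    (hgeq : ∀ n ω, (∑ j ∈ Finset.range (n - RG n ω), r (LS j ω))
        = ∑ i ∈ Finset.range (RG n ω), s (LR i ω) → RG (n + 1) ω = RG n ω + 1)
    (MG : ℕ → Ω → ℝ)
    (hMG : ∀ n ω, MG n ω = ∑ i ∈ Finset.range (RG n ω), ∑ j ∈ Finset.range (n - RG n ω),
        if LR i ω = LS j ω then (1 : ℝ) else 0) :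
    ∀ n : ℕ,
      ∫ ω, MG n ω ∂P
        = (1 / 2) * ∑ k ∈ Finset.Ico 1 n,
            ∫ ω, |(∑ i ∈ Finset.range (RG k ω), s (LR i ω))
                - ∑ j ∈ Finset.range (k - RG k ω), r (LS j ω)| ∂P
          + (n : ℝ) * ((n : ℝ) - 1) * μ / 4 := by
  have hG : IsGreedyPath r s LR LS RG := by
    refine ⟨hRG0, fun n ω => ?_⟩
    split_ifs with h
    · exact h.lt_or_eq.elim (hg1 n ω) fun heq => hgeq n ω heq.symm
    · exact hg0 n ω (not_le.1 h)
  have hL : IIDLabels P r s LR LS := ⟨hmLR, hmLS, hindep, hr, hs, hdR, hdS⟩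
  intro n
  have hM : ∀ ω, MG n ω = matchCount LR LS (RG n ω) (n - RG n ω) ω := fun ω => by
    simp [hMG, matchCount]
  rw [integral_congr_ae (ae_of_all _ hM), hG.integral_matchCount hL,
    Finset.sum_congr rfl fun k _ => hG.integral_max hL k, ← hμ]
  exact sum_range_half_add_eq (by simp [hG.zero, prefixWeight]) μ n

/-- Exact formula for the expected greedy match count:
`E M_G(n) = (1/2) ∑_{k=1}^{n-1} E|Γ_R[R_G(k)] - Γ_S[S_G(k)]| + n(n-1)μ/4`. -/
theorem greedy_expected_matches_formula
    {Ω : Type} [MeasurableSpace Ω] (P : Measure Ω) [IsProbabilityMeasure P]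
    (LR LS : ℕ → Ω → ℕ) (r s : ℕ → ℝ) (μ vR vS : ℝ)
    (hmLR : ∀ i, Measurable (LR i)) (hmLS : ∀ i, Measurable (LS i))
    (hr : ∀ j, 0 ≤ r j) (hs : ∀ j, 0 ≤ s j)
    (hdR : ∀ i j, P {ω | LR i ω = j} = ENNReal.ofReal (r j))
    (hdS : ∀ i j, P {ω | LS i ω = j} = ENNReal.ofReal (s j))
    (hindep : ProbabilityTheory.iIndepFun (Sum.elim LR LS) P)
    (hμ : μ = ∑' j, r j * s j) (hμpos : 0 < μ)
    (hvR : ProbabilityTheory.variance (fun ω => s (LR 0 ω)) P = vR)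
    (hvS : ProbabilityTheory.variance (fun ω => r (LS 0 ω)) P = vS)
    (hv : 0 < vR + vS)
    (RG : ℕ → Ω → ℕ) (hRGmeas : ∀ n, Measurable (RG n)) (hRG0 : ∀ ω, RG 0 ω = 0)
    (hstep : ∀ n ω, RG (n + 1) ω = RG n ω ∨ RG (n + 1) ω = RG n ω + 1)
    (hg1 : ∀ n ω, (∑ i ∈ Finset.range (RG n ω), s (LR i ω))
        < ∑ j ∈ Finset.range (n - RG n ω), r (LS j ω) → RG (n + 1) ω = RG n ω + 1)
    (hg0 : ∀ n ω, (∑ j ∈ Finset.range (n - RG n ω), r (LS j ω))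
        < ∑ i ∈ Finset.range (RG n ω), s (LR i ω) → RG (n + 1) ω = RG n ω)
    (hgeq : ∀ n ω, (∑ j ∈ Finset.range (n - RG n ω), r (LS j ω))
        = ∑ i ∈ Finset.range (RG n ω), s (LR i ω) → RG (n + 1) ω = RG n ω + 1)
    (MG : ℕ → Ω → ℝ)
    (hMG : ∀ n ω, MG n ω = ∑ i ∈ Finset.range (RG n ω), ∑ j ∈ Finset.range (n - RG n ω),
        if LR i ω = LS j ω then (1 : ℝ) else 0) :
    ∀ n : ℕ,
      ∫ ω, MG n ω ∂P
        = (1 / 2) * ∑ k ∈ Finset.Ico 1 n,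
            ∫ ω, |(∑ i ∈ Finset.range (RG k ω), s (LR i ω))
                - ∑ j ∈ Finset.range (k - RG k ω), r (LS j ω)| ∂P
          + (n : ℝ) * ((n : ℝ) - 1) * μ / 4 :=
  greedy_expected_matches_formula_general P LR LS r s μ hmLR hmLS hr hs hdR hdS hindep hμ RG hRG0
    hg1 hg0 hgeq MG hMG
end

section
/- With T_n as above, the sequence {((n − T_n)/√n)²}_{n≥1} is uniformly integrable; indeed (n−T_n)/√n has exponential tails: there exist constants such that Pr((n−T_n)/√n > t) ≤ 2 exp(−c t) for t≥1 and n large, with c = (μ/(2γ))² (up to constants). -/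
/-!
Write `a = ⌈n/2⌉` and `q = ⌈t√n⌉`. If `n - T_n > t√n`, one of the two greedy counters reached
`a + 1` by time `n - q`. At the step where it moved from `a` to `a + 1`, the greedy rule had
compared `Γ_R[a]` (or `Γ_S[a]`) with a prefix of the other sequence of length at most
`n - a - q`, so `Γ_R[a] ≤ Γ_S[n - a - q]` or `Γ_S[a] ≤ Γ_R[n - a - q]`. Both are events against a
mean gap of at least `q μ ≥ t √n μ` for sums of at most `n` independent `[0, γ]`-valued variables,
so Hoeffding's inequality bounds each by `exp (-2 t² μ² / γ²)`. These exponential tails bound the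
fourth moments of `(n - T_n)/√n` uniformly in `n`, and a uniform `L²` bound on the squares gives
their uniform integrability.
-/

open MeasureTheory ProbabilityTheory Real Finset
open scoped NNReal ENNReal

section Hoeffding

variable {Ω ι : Type*} [MeasurableSpace Ω] {P : Measure Ω} [IsProbabilityMeasure P]
  {X : ι → Ω → ℝ} {a b m : ℝ}

lemma hasSubgaussianMGF_sum_sub_integral (hX : iIndepFun X P) (hm : ∀ i, Measurable (X i))
    (hb : ∀ i ω, X i ω ∈ Set.Icc a b) (F : Finset ι) :
    HasSubgaussianMGF (fun ω ↦ ∑ i ∈ F, X i ω - ∫ ω', ∑ i ∈ F, X i ω' ∂P)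
      (#F * (‖b - a‖₊ / 2) ^ 2) P := by
  have hint : ∀ i, Integrable (X i) P := fun i ↦
    Integrable.of_mem_Icc a b (hm i).aemeasurable (ae_of_all _ (hb i))
  have hcentered := HasSubgaussianMGF.sum_of_iIndepFun
    (hX.comp (fun i x ↦ x - ∫ ω, X i ω ∂P) (fun i ↦ by fun_prop))
    (s := F) (fun i _ ↦ hasSubgaussianMGF_of_mem_Icc (hm i).aemeasurable (ae_of_all _ (hb i)))
  rw [sum_const, nsmul_eq_mul] at hcentered
  refine hcentered.congr (ae_of_all _ fun ω ↦ ?_)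
  simp only [Function.comp_apply, integral_finsetSum F fun i _ ↦ hint i, sum_sub_distrib]

lemma measureReal_sum_le_sum_le_exp (hX : iIndepFun X P) (hm : ∀ i, Measurable (X i))
    (hb : ∀ i ω, X i ω ∈ Set.Icc a b) (hmean : ∀ i, ∫ ω, X i ω ∂P = m)
    {F G : Finset ι} (hFG : Disjoint F G) (hle : #G * m ≤ #F * m) :
    P.real {ω | ∑ i ∈ F, X i ω ≤ ∑ i ∈ G, X i ω}
      ≤ exp (-2 * ((#F - #G) * m) ^ 2 / ((#F + #G) * (b - a) ^ 2)) := by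
  have hint : ∀ i, Integrable (X i) P := fun i ↦
    Integrable.of_mem_Icc a b (hm i).aemeasurable (ae_of_all _ (hb i))
  have hsum : ∀ s : Finset ι, ∫ ω, ∑ i ∈ s, X i ω ∂P = #s * m := fun s ↦ by
    simp [integral_finsetSum s fun i _ ↦ hint i, hmean]
  have hindep : IndepFun (fun ω ↦ ∑ i ∈ F, X i ω) (fun ω ↦ ∑ i ∈ G, X i ω) P := by
    have := (hX.indepFun_finset F G hFG hm).comp (φ := fun v : F → ℝ ↦ ∑ i, v i)
      (ψ := fun v : G → ℝ ↦ ∑ i, v i) (by fun_prop) (by fun_prop)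
    convert this using 1 <;> ext ω <;> exact (sum_attach _ _).symm
  refine (HasSubgaussianMGF.measureReal_le_le_exp
    (hasSubgaussianMGF_sum_sub_integral hX hm hb F)
    (hasSubgaussianMGF_sum_sub_integral hX hm hb G) hindep (by rwa [hsum, hsum])).trans_eq ?_
  rw [hsum, hsum]
  congr 1
  push_cast
  rw [show 2 * ((#F : ℝ) * (‖b - a‖ / 2) ^ 2 + #G * (‖b - a‖ / 2) ^ 2)
      = (#F + #G) * (b - a) ^ 2 / 2 by rw [Real.norm_eq_abs, div_pow, sq_abs]; ring,
    div_div_eq_mul_div]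
  ring

end Hoeffding

lemma pow_le_sum_ite_lt {z : ℝ} {k L : ℕ} (hk : k ≠ 0) (hz : 0 ≤ z) (hzL : z ≤ L) :
    z ^ k ≤ ∑ j ∈ range L, if (j : ℝ) < z then ((j : ℝ) + 1) ^ k else 0 := by
  have hnonneg : ∀ j ∈ range L, 0 ≤ if (j : ℝ) < z then ((j : ℝ) + 1) ^ k else 0 :=
    fun j _ ↦ by split_ifs <;> positivity
  rcases hz.eq_or_lt with rfl | hz
  · simpa [zero_pow hk] using sum_nonneg hnonneg
  have hceil : 1 ≤ ⌈z⌉₊ := Nat.one_le_iff_ne_zero.2 (Nat.ceil_pos.2 hz).ne'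
  have hmem : ⌈z⌉₊ - 1 ∈ range L := mem_range.2 (by have := Nat.ceil_le.2 hzL; omega)
  have hlt : ((⌈z⌉₊ - 1 : ℕ) : ℝ) < z := by
    rw [Nat.cast_sub hceil, Nat.cast_one, sub_lt_iff_lt_add]
    exact Nat.ceil_lt_add_one hz.le
  calc z ^ k ≤ (⌈z⌉₊ : ℝ) ^ k := pow_le_pow_left₀ hz.le (Nat.le_ceil z) k
    _ = if ((⌈z⌉₊ - 1 : ℕ) : ℝ) < z then (((⌈z⌉₊ - 1 : ℕ) : ℝ) + 1) ^ k else 0 := by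
      rw [if_pos hlt, Nat.cast_sub hceil, Nat.cast_one, sub_add_cancel]
    _ ≤ _ := single_le_sum hnonneg hmem

section UniformIntegrability

variable {Ω : Type*} [MeasurableSpace Ω] {P : Measure Ω}

lemma integrable_pow_of_mem_Icc [IsFiniteMeasure P] {Z : Ω → ℝ} {K : ℝ} (hZm : Measurable Z)
    (hZ : ∀ ω, Z ω ∈ Set.Icc 0 K) (k : ℕ) : Integrable (fun ω ↦ Z ω ^ k) P :=
  Integrable.of_mem_Icc 0 (K ^ k) (hZm.pow_const k).aemeasurable (ae_of_all _ fun ω ↦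
    ⟨pow_nonneg (hZ ω).1 k, pow_le_pow_left₀ (hZ ω).1 (hZ ω).2 k⟩)

lemma integral_pow_le_tsum_of_measureReal_lt_le [IsFiniteMeasure P] {Z : Ω → ℝ} {k : ℕ} {K : ℝ}
    (hk : k ≠ 0) (hZm : Measurable Z) (hZ : ∀ ω, Z ω ∈ Set.Icc 0 K) {u : ℕ → ℝ}
    (htail : ∀ j : ℕ, P.real {ω | (j : ℝ) < Z ω} ≤ u j)
    (hu : Summable fun j : ℕ ↦ ((j : ℝ) + 1) ^ k * u j) :
    ∫ ω, Z ω ^ k ∂P ≤ ∑' j : ℕ, ((j : ℝ) + 1) ^ k * u j := by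
  have hset : ∀ j : ℕ, MeasurableSet {ω | (j : ℝ) < Z ω} :=
    fun j ↦ measurableSet_lt measurable_const hZm
  have hind : ∀ j : ℕ, Integrable ({ω | (j : ℝ) < Z ω}.indicator fun _ ↦ ((j : ℝ) + 1) ^ k) P :=
    fun j ↦ (integrable_const _).indicator (hset j)
  calc ∫ ω, Z ω ^ k ∂P
      ≤ ∫ ω, ∑ j ∈ range ⌈K⌉₊, {ω | (j : ℝ) < Z ω}.indicator (fun _ ↦ ((j : ℝ) + 1) ^ k) ω ∂P :=
        integral_mono (integrable_pow_of_mem_Icc hZm hZ k)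
          (integrable_finsetSum _ fun j _ ↦ hind j) fun ω ↦ pow_le_sum_ite_lt hk (hZ ω).1 ((hZ ω).2.trans (Nat.le_ceil K))
    _ = ∑ j ∈ range ⌈K⌉₊, P.real {ω | (j : ℝ) < Z ω} * ((j : ℝ) + 1) ^ k := by
        rw [integral_finsetSum _ fun j _ ↦ hind j]
        simp only [integral_indicator_const _ (hset _), smul_eq_mul]
    _ ≤ ∑ j ∈ range ⌈K⌉₊, ((j : ℝ) + 1) ^ k * u j :=
        sum_le_sum fun j _ ↦ by rw [mul_comm]; gcongr; exact htail j
    _ ≤ ∑' j : ℕ, ((j : ℝ) + 1) ^ k * u j :=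
        hu.sum_le_tsum _ fun j _ ↦ mul_nonneg (by positivity) (measureReal_nonneg.trans (htail j))

lemma uniformIntegrable_of_integral_sq_le [IsFiniteMeasure P] {ι : Type*} {g : ι → Ω → ℝ}
    (hg : ∀ i, AEStronglyMeasurable (g i) P) (hint : ∀ i, Integrable (fun ω ↦ g i ω ^ 2) P)
    {M : ℝ} (hM : ∀ i, ∫ ω, g i ω ^ 2 ∂P ≤ M) :
    UniformIntegrable g 1 P := by
  refine uniformIntegrable_of le_rfl ENNReal.one_ne_top hg fun ε hε ↦ ?_
  set C : ℝ≥0 := (M / ε).toNNReal + 1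
  have hC : 0 < (C : ℝ) := by positivity
  have hMC : M / C ≤ ε := by
    rw [div_le_iff₀ hC, ← div_le_iff₀' hε]
    exact (Real.le_coe_toNNReal _).trans (by simp [C])
  refine ⟨C, fun i ↦ ?_⟩
  have hpt : ∀ ω, ‖{x | C ≤ ‖g i x‖₊}.indicator (g i) ω‖ ≤ g i ω ^ 2 / C := by
    intro ω
    by_cases hω : C ≤ ‖g i ω‖₊
    · rw [Set.indicator_of_mem (s := {x | C ≤ ‖g i x‖₊}) hω, le_div_iff₀ hC, ← sq_abs, sq,
        ← Real.norm_eq_abs]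
      exact mul_le_mul_of_nonneg_left (by exact_mod_cast hω) (norm_nonneg _)
    · rw [Set.indicator_of_notMem (s := {x | C ≤ ‖g i x‖₊}) hω, norm_zero]
      positivity
  calc eLpNorm ({x | C ≤ ‖g i x‖₊}.indicator (g i)) 1 P
      ≤ eLpNorm (fun ω ↦ g i ω ^ 2 / C) 1 P := eLpNorm_mono_real hpt
    _ = ENNReal.ofReal (∫ ω, g i ω ^ 2 / C ∂P) := by
        rw [eLpNorm_one_eq_lintegral_enorm, ofReal_integral_eq_lintegral_ofReal
          ((hint i).div_const _) (ae_of_all _ fun ω ↦ by positivity)]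
        exact lintegral_congr fun ω ↦ Real.enorm_of_nonneg (by positivity)
    _ ≤ ENNReal.ofReal ε := by
        rw [integral_div]
        exact ENNReal.ofReal_le_ofReal ((div_le_div_of_nonneg_right (hM i) hC.le).trans hMC)

lemma uniformIntegrable_sq_of_exp_tail [IsProbabilityMeasure P] {ι : Type*} {Z : ι → Ω → ℝ}
    {K : ι → ℝ} (hZm : ∀ i, Measurable (Z i)) (hZ : ∀ i ω, Z i ω ∈ Set.Icc 0 (K i)) {c : ℝ} (hc : 0 < c)
    (htail : ∀ i, ∀ t : ℝ, 1 ≤ t → P.real {ω | t < Z i ω} ≤ 2 * exp (-c * t)) :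
    UniformIntegrable (fun i ω ↦ Z i ω ^ 2) 1 P := by
  have hsummable : Summable fun j : ℕ ↦ ((j : ℝ) + 1) ^ 4 * (2 * exp (-c * j)) := by
    refine (((summable_nat_add_iff 1).2 (summable_pow_mul_exp_neg_nat_mul 4 hc)).mul_left
      (2 * exp c)).congr fun j ↦ ?_
    push_cast
    rw [show -c * ((j : ℝ) + 1) = -c * j + -c by ring, exp_add, exp_neg]
    field_simp
  have hZtail : ∀ i (j : ℕ), P.real {ω | (j : ℝ) < Z i ω} ≤ 2 * exp (-c * j) := by
    intro i j
    rcases j.eq_zero_or_pos with rfl | hj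
    · simpa using measureReal_le_one.trans one_le_two
    · exact htail i j (by exact_mod_cast hj)
  refine uniformIntegrable_of_integral_sq_le (fun i ↦ ((hZm i).pow_const 2).aestronglyMeasurable)
    (fun i ↦ ?_) (M := ∑' j : ℕ, ((j : ℝ) + 1) ^ 4 * (2 * exp (-c * j))) fun i ↦ ?_
  all_goals simp_rw [← pow_mul]
  · exact integrable_pow_of_mem_Icc (hZm i) (hZ i) 4
  · exact integral_pow_le_tsum_of_measureReal_lt_le (k := 4) (by norm_num) (hZm i) (hZ i)
      (hZtail i) hsummable

end UniformIntegrability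

lemma exists_eq_and_succ_eq_of_lt {u : ℕ → ℕ} (h0 : u 0 = 0)
    (hstep : ∀ k, u (k + 1) = u k ∨ u (k + 1) = u k + 1) {m K : ℕ} (hm : m < u K) :
    ∃ j < K, u j = m ∧ u (j + 1) = m + 1 := by
  induction K with
  | zero => omega
  | succ K ih =>
    by_cases hK : m < u K
    · obtain ⟨j, hjK, hj⟩ := ih hK
      exact ⟨j, by omega, hj⟩
    · exact ⟨K, by omega, by rcases hstep K with h | h <;> omega⟩

/-- `r k` is the number of items taken from the `R` sequence among the first `k` items of the
greedy merge, so `k - r k` were taken from `S`; `∑ i ∈ range (r k), xR i` is `Γ_R[r k]`. -/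
structure IsGreedyPath_s15 (xR xS : ℕ → ℝ) (r : ℕ → ℕ) : Prop where
  zero : r 0 = 0
  step : ∀ k, r (k + 1) = r k ∨ r (k + 1) = r k + 1
  succ_of_lt : ∀ k, ∑ i ∈ range (r k), xR i < ∑ j ∈ range (k - r k), xS j → r (k + 1) = r k + 1
  eq_of_lt : ∀ k, ∑ j ∈ range (k - r k), xS j < ∑ i ∈ range (r k), xR i → r (k + 1) = r k

/-- With `m = ⌈n/2⌉ + 1`, the stopping time of the greedy merge is
`T_n = min n (sInf (hitSet r m))`. -/
def hitSet (r : ℕ → ℕ) (m : ℕ) : Set ℕ :=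
  {k | 1 ≤ k ∧ ((k + 1) - r (k + 1) = m ∨ r (k + 1) = m)}

namespace IsGreedyPath_s15

variable {xR xS : ℕ → ℝ} {r : ℕ → ℕ}

lemma le_self (h : IsGreedyPath_s15 xR xS r) (k : ℕ) : r k ≤ k := by
  induction k with
  | zero => exact h.zero.le
  | succ k ih => rcases h.step k with h | h <;> omega

lemma sub_step (h : IsGreedyPath_s15 xR xS r) (k : ℕ) :
    (k + 1) - r (k + 1) = k - r k ∨ (k + 1) - r (k + 1) = k - r k + 1 := by
  have := h.le_self k
  rcases h.step k with h | h <;> omega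

lemma sum_le_of_succ (h : IsGreedyPath_s15 xR xS r) {k : ℕ} (hk : r (k + 1) = r k + 1) :
    ∑ i ∈ range (r k), xR i ≤ ∑ j ∈ range (k - r k), xS j :=
  not_lt.1 fun hlt ↦ by have := h.eq_of_lt k hlt; omega

lemma sum_le_of_eq (h : IsGreedyPath_s15 xR xS r) {k : ℕ} (hk : r (k + 1) = r k) :
    ∑ j ∈ range (k - r k), xS j ≤ ∑ i ∈ range (r k), xR i :=
  not_lt.1 fun hlt ↦ by have := h.succ_of_lt k hlt; omega

lemma hitSet_nonempty (h : IsGreedyPath_s15 xR xS r) {m : ℕ} (hm : 2 ≤ m) :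
    (hitSet r m).Nonempty := by
  have hle := h.le_self (2 * m - 1)
  by_cases hR : m - 1 < r (2 * m - 1)
  · obtain ⟨j, -, hj, hj'⟩ := exists_eq_and_succ_eq_of_lt h.zero h.step hR
    have := h.le_self j
    exact ⟨j, by omega, Or.inr (by omega)⟩
  · obtain ⟨j, -, hj, hj'⟩ := exists_eq_and_succ_eq_of_lt (u := fun k ↦ k - r k) (Nat.zero_sub _)
      h.sub_step (K := 2 * m - 1) (m := m - 1) (by omega)
    exact ⟨j, by omega, Or.inl (by omega)⟩

lemma le_of_mem_hitSet (h : IsGreedyPath_s15 xR xS r) {m k : ℕ} (hk : k ∈ hitSet r (m + 1)) :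
    m ≤ k := by
  have := h.le_self (k + 1)
  rcases hk.2 with hk | hk <;> omega

lemma sum_le_or_sum_le_of_mem_hitSet (h : IsGreedyPath_s15 xR xS r)
    (hR : ∀ i, 0 ≤ xR i) (hS : ∀ j, 0 ≤ xS j) {m k B : ℕ} (hk : k ∈ hitSet r (m + 1))
    (hkB : k ≤ m + B) :
    ∑ i ∈ range m, xR i ≤ ∑ j ∈ range B, xS j ∨ ∑ j ∈ range m, xS j ≤ ∑ i ∈ range B, xR i := by
  rcases hk.2 with hkS | hkR
  · obtain ⟨j, hjk, hj, hj'⟩ := exists_eq_and_succ_eq_of_lt (u := fun k ↦ k - r k) (Nat.zero_sub _)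
      h.sub_step (K := k + 1) (m := m) (by omega)
    have hstay : r (j + 1) = r j := by have := h.le_self j; omega
    right
    rw [← hj]
    refine (h.sum_le_of_eq hstay).trans ?_
    exact sum_le_sum_of_subset_of_nonneg (range_subset_range.2 (by omega)) fun i _ _ ↦ hR i
  · obtain ⟨j, hjk, hj, hj'⟩ := exists_eq_and_succ_eq_of_lt h.zero h.step
      (K := k + 1) (m := m) (by omega)
    left
    rw [← hj]
    refine (h.sum_le_of_succ (by omega)).trans ?_
    exact sum_le_sum_of_subset_of_nonneg (range_subset_range.2 (by omega)) fun i _ _ ↦ hS i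

lemma sum_le_or_sum_le_of_min_sInf_add_le (h : IsGreedyPath_s15 xR xS r)
    (hR : ∀ i, 0 ≤ xR i) (hS : ∀ j, 0 ≤ xS j) {n m q : ℕ} (hm : 1 ≤ m) (hq : 0 < q)
    (hTq : min n (sInf (hitSet r (m + 1))) + q ≤ n) :
    m + q ≤ n ∧ (∑ i ∈ range m, xR i ≤ ∑ j ∈ range (n - m - q), xS j ∨
      ∑ j ∈ range m, xS j ≤ ∑ i ∈ range (n - m - q), xR i) := by
  have hmem := Nat.sInf_mem (h.hitSet_nonempty (m := m + 1) (by omega))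
  have hτ := h.le_of_mem_hitSet hmem
  have hstop : sInf (hitSet r (m + 1)) + q ≤ n := by omega
  exact ⟨by omega, h.sum_le_or_sum_le_of_mem_hitSet hR hS hmem (by omega)⟩

end IsGreedyPath_s15

lemma measurable_sInf_setOf {α : Type*} [MeasurableSpace α] {p : α → ℕ → Prop}
    (hp : ∀ x, ∃ k, p x k) (hm : ∀ k, MeasurableSet {x | p x k}) :
    Measurable fun x ↦ sInf {k | p x k} := by
  classical
  rw [show (fun x ↦ sInf {k | p x k}) = fun x ↦ Nat.find (hp x) from
    funext fun x ↦ Nat.sInf_def (hp x)]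
  exact measurable_find hp hm

lemma ceil_pos_and_add_ceil_le {n T : ℕ} {t : ℝ} (ht : 1 ≤ t) (h : t < ((n : ℝ) - T) / √n) :
    0 < ⌈t * √n⌉₊ ∧ T + ⌈t * √n⌉₊ ≤ n := by
  have hn : (n : ℝ) ≠ 0 := fun hn ↦ by simp [hn] at h; linarith
  have hsqrt : 1 ≤ √n := Real.one_le_sqrt.2 (by
    have := Nat.one_le_iff_ne_zero.2 (by exact_mod_cast hn); exact_mod_cast this)
  have hlt : t * √n < n - T := (lt_div_iff₀ (by linarith)).1 h
  have hpos : 0 < t * √n := by nlinarith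
  have hTn : T ≤ n := by exact_mod_cast (by linarith : (T : ℝ) ≤ n)
  refine ⟨Nat.ceil_pos.2 hpos, ?_⟩
  have : ⌈t * √n⌉₊ ≤ n - T := Nat.ceil_le.2 (by push_cast [hTn]; linarith)
  omega

lemma hoeffding_exponent_le {A B n t μ γ : ℝ} (hAB : 0 < A + B) (hn : A + B ≤ n) (ht : 1 ≤ t)
    (hgap : t * √n ≤ A - B) (hγ : 0 < γ) :
    -2 * ((A - B) * μ) ^ 2 / ((A + B) * γ ^ 2) ≤ -(μ / (2 * γ)) ^ 2 * t := by
  have hgap2 : t * (A + B) ≤ (A - B) ^ 2 := calc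
    t * (A + B) ≤ t ^ 2 * n := by
      nlinarith [mul_le_mul_of_nonneg_left hn (by linarith : 0 ≤ t),
        mul_le_mul_of_nonneg_right (by nlinarith : t ≤ t ^ 2) (by linarith : 0 ≤ n)]
    _ = (t * √n) ^ 2 := by rw [mul_pow, Real.sq_sqrt (by linarith)]
    _ ≤ (A - B) ^ 2 := pow_le_pow_left₀ (by positivity) hgap 2
  rw [div_le_iff₀ (by positivity), div_pow]
  field_simp
  nlinarith [mul_le_mul_of_nonneg_right hgap2 (sq_nonneg μ), sq_nonneg μ, sq_nonneg γ]

section Tail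

variable {Ω : Type*} [MeasurableSpace Ω] {P : Measure Ω} [IsProbabilityMeasure P]

lemma measurable_min_sInf_hitSet {RG : ℕ → Ω → ℕ} (hRG : ∀ k, Measurable (RG k))
    {xR xS : Ω → ℕ → ℝ} (hpath : ∀ ω, IsGreedyPath_s15 (xR ω) (xS ω) (RG · ω)) (n : ℕ) :
    Measurable fun ω ↦ min n (sInf (hitSet (RG · ω) ((n + 1) / 2 + 1))) := by
  rcases n.eq_zero_or_pos with rfl | hn
  · simp
  refine measurable_const.min (measurable_sInf_setOf
    (fun ω ↦ (hpath ω).hitSet_nonempty (by omega)) fun k ↦ ?_)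
  measurability

lemma measureReal_lt_deficit_le {X : ℕ ⊕ ℕ → Ω → ℝ} {γ μ : ℝ} (hγ : 0 < γ) (hμ : 0 < μ)
    (hX : iIndepFun X P) (hm : ∀ c, Measurable (X c)) (hb : ∀ c ω, X c ω ∈ Set.Icc 0 γ)
    (hmean : ∀ c, ∫ ω, X c ω ∂P = μ) {RG : ℕ → Ω → ℕ}
    (hpath : ∀ ω, IsGreedyPath_s15 (fun i ↦ X (.inl i) ω) (fun j ↦ X (.inr j) ω) (RG · ω))
    {n : ℕ} {T : Ω → ℕ} (hT : ∀ ω, T ω = min n (sInf (hitSet (RG · ω) ((n + 1) / 2 + 1))))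
    {t : ℝ} (ht : 1 ≤ t) :
    P.real {ω | t < ((n : ℝ) - T ω) / √n} ≤ 2 * exp (-(μ / (2 * γ)) ^ 2 * t) := by
  set a := (n + 1) / 2
  set q := ⌈t * √n⌉₊
  have hevent : ∀ ω, t < ((n : ℝ) - T ω) / √n → (0 < q ∧ a + q ≤ n) ∧
      (∑ i ∈ range a, X (.inl i) ω ≤ ∑ j ∈ range (n - a - q), X (.inr j) ω ∨
        ∑ j ∈ range a, X (.inr j) ω ≤ ∑ i ∈ range (n - a - q), X (.inl i) ω) := fun ω hω ↦ by
    obtain ⟨hq, hTq⟩ := ceil_pos_and_add_ceil_le ht hω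
    rw [hT ω] at hTq
    have := (hpath ω).sum_le_or_sum_le_of_min_sInf_add_le (fun i ↦ (hb _ ω).1)
      (fun j ↦ (hb _ ω).1) (by omega) hq hTq
    exact ⟨⟨hq, this.1⟩, this.2⟩
  by_cases haq : 0 < q ∧ a + q ≤ n
  swap
  · calc P.real _ ≤ P.real (∅ : Set Ω) := measureReal_mono fun ω hω ↦ (haq (hevent ω hω).1).elim
      _ ≤ _ := by rw [measureReal_empty]; positivity
  have hhoeffding : ∀ F G : Finset (ℕ ⊕ ℕ), Disjoint F G → #F = a → #G = n - a - q →
      P.real {ω | ∑ c ∈ F, X c ω ≤ ∑ c ∈ G, X c ω} ≤ exp (-(μ / (2 * γ)) ^ 2 * t) := by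
    intro F G hFG hF hG
    have hBa : n - a - q ≤ a := by omega
    refine (measureReal_sum_le_sum_le_exp hX hm hb hmean hFG ?_).trans (exp_le_exp.2 ?_)
    · rw [hF, hG]
      exact mul_le_mul_of_nonneg_right (by exact_mod_cast hBa) hμ.le
    · rw [hF, hG, sub_zero]
      have ha : (0 : ℝ) < a := by exact_mod_cast (show 0 < a by omega)
      have hBq : ((n - a - q : ℕ) : ℝ) + q ≤ a := by
        exact_mod_cast (show n - a - q + q ≤ a by omega)
      refine hoeffding_exponent_le (n := n) (by positivity)
        (by exact_mod_cast (show a + (n - a - q) ≤ n by omega)) ht ?_ hγ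
      linarith [Nat.le_ceil (t * √n)]
  calc P.real {ω | t < ((n : ℝ) - T ω) / √n}
      ≤ P.real ({ω | ∑ c ∈ (range a).map .inl, X c ω ≤ ∑ c ∈ (range (n - a - q)).map .inr, X c ω}
        ∪ {ω | ∑ c ∈ (range a).map .inr, X c ω ≤ ∑ c ∈ (range (n - a - q)).map .inl, X c ω}) :=
        measureReal_mono fun ω hω ↦ by simpa [sum_map] using (hevent ω hω).2
    _ ≤ exp (-(μ / (2 * γ)) ^ 2 * t) + exp (-(μ / (2 * γ)) ^ 2 * t) :=
        (measureReal_union_le _ _).trans (add_le_add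
          (hhoeffding _ _ (disjoint_map_inl_map_inr _ _) (by simp) (by simp))
          (hhoeffding _ _ (disjoint_map_inl_map_inr _ _).symm (by simp) (by simp)))
    _ = 2 * exp (-(μ / (2 * γ)) ^ 2 * t) := by ring

lemma deficit_mem_Icc {n T : ℕ} (h : T ≤ n) : ((n : ℝ) - T) / √n ∈ Set.Icc 0 √n := by
  have : (T : ℝ) ≤ n := by exact_mod_cast h
  refine ⟨by positivity, ?_⟩
  calc ((n : ℝ) - T) / √n ≤ n / √n := by gcongr; linarith
    _ = √n := Real.div_sqrt

end Tail

theorem greedy_stopping_time_uniform_integrability_general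
    {Ω : Type} [MeasurableSpace Ω] (P : Measure Ω) [IsProbabilityMeasure P]
    (XR XS : ℕ → Ω → ℝ) (γ μ : ℝ)
    (hγ : 0 < γ) (hμ : 0 < μ)
    (hmR : ∀ i, Measurable (XR i)) (hmS : ∀ i, Measurable (XS i))
    (hbR : ∀ i ω, XR i ω ∈ Set.Icc (0 : ℝ) γ) (hbS : ∀ i ω, XS i ω ∈ Set.Icc (0 : ℝ) γ)
    (hidR : ∀ i, P.map (XR i) = P.map (XR 0)) (hidS : ∀ i, P.map (XS i) = P.map (XS 0))
    (hindep : ProbabilityTheory.iIndepFun (Sum.elim XR XS) P)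
    (hmeanR : ∫ ω, XR 0 ω ∂P = μ) (hmeanS : ∫ ω, XS 0 ω ∂P = μ)
    (RG : ℕ → Ω → ℕ) (hRGmeas : ∀ n, Measurable (RG n)) (hRG0 : ∀ ω, RG 0 ω = 0)
    (hstep : ∀ n ω, RG (n + 1) ω = RG n ω ∨ RG (n + 1) ω = RG n ω + 1)
    (hg1 : ∀ n ω, (∑ i ∈ Finset.range (RG n ω), XR i ω)
        < ∑ j ∈ Finset.range (n - RG n ω), XS j ω → RG (n + 1) ω = RG n ω + 1)
    (hg0 : ∀ n ω, (∑ j ∈ Finset.range (n - RG n ω), XS j ω)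
        < ∑ i ∈ Finset.range (RG n ω), XR i ω → RG (n + 1) ω = RG n ω)
    (T : ℕ → Ω → ℕ)
    (hT : ∀ n ω, T n ω = min n (sInf {k : ℕ | 1 ≤ k ∧
        ((k + 1) - RG (k + 1) ω = (n + 1) / 2 + 1 ∨ RG (k + 1) ω = (n + 1) / 2 + 1)})) :
    UniformIntegrable (fun (n : ℕ) (ω : Ω) => (((n : ℝ) - T n ω) / Real.sqrt n) ^ 2) 1 P ∧
    ∃ N : ℕ, ∀ t : ℝ, 1 ≤ t → ∀ n : ℕ, N ≤ n →
      P {ω | t < ((n : ℝ) - T n ω) / Real.sqrt n}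
        ≤ ENNReal.ofReal (2 * Real.exp (-(μ / (2 * γ)) ^ 2 * t)) := by
  have hpath : ∀ ω, IsGreedyPath_s15 (XR · ω) (XS · ω) (RG · ω) :=
    fun ω ↦ ⟨hRG0 ω, (hstep · ω), (hg1 · ω), (hg0 · ω)⟩
  have hmean : ∀ c, ∫ ω, Sum.elim XR XS c ω ∂P = μ := Sum.forall.2
    ⟨fun i ↦ (IdentDistrib.integral_eq ⟨(hmR i).aemeasurable, (hmR 0).aemeasurable, hidR i⟩).trans
      hmeanR,
     fun j ↦ (IdentDistrib.integral_eq ⟨(hmS j).aemeasurable, (hmS 0).aemeasurable, hidS j⟩).trans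
      hmeanS⟩
  have htail : ∀ (n : ℕ) (t : ℝ), 1 ≤ t → P.real {ω | t < ((n : ℝ) - T n ω) / √n}
      ≤ 2 * exp (-(μ / (2 * γ)) ^ 2 * t) := fun n t ↦
    measureReal_lt_deficit_le hγ hμ hindep (Sum.forall.2 ⟨hmR, hmS⟩)
      (Sum.forall.2 ⟨hbR, hbS⟩) hmean hpath (hT n)
  have hTm : ∀ n, Measurable (T n) := fun n ↦ by
    rw [funext (hT n)]
    exact measurable_min_sInf_hitSet hRGmeas hpath n
  refine ⟨uniformIntegrable_sq_of_exp_tail (fun n ↦ by fun_prop)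
    (fun n ω ↦ deficit_mem_Icc ((hT n ω).trans_le (min_le_left _ _))) (by positivity) htail,
    0, fun t ht n _ ↦ ?_⟩
  rw [← ofReal_measureReal]
  exact ENNReal.ofReal_le_ofReal (htail n t ht)

/-- The sequence `((n - T_n)/√n)²` is uniformly integrable; moreover `(n - T_n)/√n` has
exponential tails: for all large `n` and `t ≥ 1`,
`Pr((n - T_n)/√n > t) ≤ 2 exp(-(μ/(2γ))² t)`. -/
theorem greedy_stopping_time_uniform_integrability
    {Ω : Type} [MeasurableSpace Ω] (P : Measure Ω) [IsProbabilityMeasure P]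
    (XR XS : ℕ → Ω → ℝ) (γ μ vR vS : ℝ)
    (hγ : 0 < γ) (hμ : 0 < μ) (hv : 0 < vR + vS)
    (hmR : ∀ i, Measurable (XR i)) (hmS : ∀ i, Measurable (XS i))
    (hbR : ∀ i ω, XR i ω ∈ Set.Icc (0 : ℝ) γ) (hbS : ∀ i ω, XS i ω ∈ Set.Icc (0 : ℝ) γ)
    (hidR : ∀ i, P.map (XR i) = P.map (XR 0)) (hidS : ∀ i, P.map (XS i) = P.map (XS 0))
    (hindep : ProbabilityTheory.iIndepFun (Sum.elim XR XS) P)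
    (hmeanR : ∫ ω, XR 0 ω ∂P = μ) (hmeanS : ∫ ω, XS 0 ω ∂P = μ)
    (hvR : ProbabilityTheory.variance (XR 0) P = vR)
    (hvS : ProbabilityTheory.variance (XS 0) P = vS)
    (RG : ℕ → Ω → ℕ) (hRGmeas : ∀ n, Measurable (RG n)) (hRG0 : ∀ ω, RG 0 ω = 0)
    (hstep : ∀ n ω, RG (n + 1) ω = RG n ω ∨ RG (n + 1) ω = RG n ω + 1)
    (hg1 : ∀ n ω, (∑ i ∈ Finset.range (RG n ω), XR i ω)
        < ∑ j ∈ Finset.range (n - RG n ω), XS j ω → RG (n + 1) ω = RG n ω + 1)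
    (hg0 : ∀ n ω, (∑ j ∈ Finset.range (n - RG n ω), XS j ω)
        < ∑ i ∈ Finset.range (RG n ω), XR i ω → RG (n + 1) ω = RG n ω)
    (hgeq : ∀ n ω, (∑ j ∈ Finset.range (n - RG n ω), XS j ω)
        = ∑ i ∈ Finset.range (RG n ω), XR i ω → RG (n + 1) ω = RG n ω + 1)
    (T : ℕ → Ω → ℕ)
    (hT : ∀ n ω, T n ω = min n (sInf {k : ℕ | 1 ≤ k ∧
        ((k + 1) - RG (k + 1) ω = (n + 1) / 2 + 1 ∨ RG (k + 1) ω = (n + 1) / 2 + 1)})) :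
    UniformIntegrable (fun (n : ℕ) (ω : Ω) => (((n : ℝ) - T n ω) / Real.sqrt n) ^ 2) 1 P ∧
    ∃ N : ℕ, ∀ t : ℝ, 1 ≤ t → ∀ n : ℕ, N ≤ n →
      P {ω | t < ((n : ℝ) - T n ω) / Real.sqrt n}
        ≤ ENNReal.ofReal (2 * Real.exp (-(μ / (2 * γ)) ^ 2 * t)) :=
  greedy_stopping_time_uniform_integrability_general P XR XS γ μ hγ hμ hmR hmS hbR hbS hidR hidS
    hindep hmeanR hmeanS RG hRGmeas hRG0 hstep hg1 hg0 T hT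
end
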